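/- arXiv:1201.4512 — 7 statements merged into one kernel-verified Lean document; each statement's English description precedes it below -/
import Mathlib

section
/- Let S be a finite set of points in ℝ^d and z ∈ ℝ^d \ S. Suppose S is a z-containing set and z is in general position with respect to S. Then |A(S)| ≤ (d+1)·|C(S)|. -/
/-- Points of `ℝ^d`. -/
abbrev Pt (d : ℕ) := EuclideanSpace ℝ (Fin d)

/-- `X` is `z`-containing: `z` lies in the interior of the convex hull of `X`. -/
def IsZContaining (d : ℕ) (z : Pt d) (X : Set (Pt d)) : Prop :=
  z ∈ interior (convexHull ℝ X)

/-- `X` is `z`-avoiding: `z` does not lie in the interior of the convex hull of `X`. -/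
def IsZAvoiding (d : ℕ) (z : Pt d) (X : Set (Pt d)) : Prop :=
  z ∉ interior (convexHull ℝ X)

/-- `𝒞(S)`: the collection of minimal `z`-containing subsets of `S`. -/
def MinContaining (d : ℕ) (z : Pt d) (S : Set (Pt d)) : Set (Set (Pt d)) :=
  {C | C ⊆ S ∧ IsZContaining d z C ∧ ∀ Y : Set (Pt d), Y ⊂ C → ¬ IsZContaining d z Y}

/-- `𝒜(S)`: the collection of maximal `z`-avoiding subsets of `S`. -/
def MaxAvoiding (d : ℕ) (z : Pt d) (S : Set (Pt d)) : Set (Set (Pt d)) :=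
  {A | A ⊆ S ∧ IsZAvoiding d z A ∧ ∀ B : Set (Pt d), B ⊆ S → A ⊂ B → ¬ IsZAvoiding d z B}

/-- `z` is in general position with respect to `S`: for every `X ⊆ S` whose affine span
has dimension less than `d`, `z` does not belong to the affine span of `X`. -/
def GenPos (d : ℕ) (z : Pt d) (S : Set (Pt d)) : Prop :=
  ∀ X : Set (Pt d), X ⊆ S → Module.finrank ℝ (vectorSpan ℝ X) < d → z ∉ affineSpan ℝ X

/-!
Under general position every minimal `z`-containing set is a `d`-simplex. Given a maximal
`z`-avoiding set `A` and `c ∈ S \ A`, the ray from `c` through `z` enters `conv A` at a boundary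
point `w`, which lies in the relative interior of some `conv D` with `D ⊆ A`, `|D| = d`. Then
`C = D ∪ {c}` is a minimal containing simplex, and since the segment from `w` back towards `c`
immediately leaves `conv A`, the hyperplane `aff D` supports `conv A`. So the barycentric
coordinate `f` of `c` with respect to `C` is `≤ 0` on `A` and positive at `z`, and maximality
forces `A = {s ∈ S | f s < f z}`. Hence `A` is determined by the pair `(C, c)`, and there are
`(d + 1) |C(S)|` such pairs.
-/

open Filter Topology AffineMap
open scoped Finset

section Convexity

variable {E : Type*} [AddCommGroup E] [Module ℝ E]

theorem exists_affineIndependent_pos_weights_of_mem_convexHull {s : Set E} {x : E}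
    (hx : x ∈ convexHull ℝ s) :
    ∃ D : Finset E, ↑D ⊆ s ∧ AffineIndependent ℝ ((↑) : D → E) ∧ x ∈ convexHull ℝ ↑D ∧
      ∃ μ : E → ℝ, (∀ y ∈ D, 0 < μ y) ∧ ∑ y ∈ D, μ y = 1 ∧ ∑ y ∈ D, μ y • y = x := by
  rw [convexHull_eq_union] at hx
  simp only [Set.mem_iUnion] at hx
  obtain ⟨t, hts, hind, hxt⟩ := hx
  obtain ⟨μ, hμ0, hμ1, hμx⟩ := (Finset.convexHull_eq t).subset hxt
  rw [Finset.centerMass_eq_of_sum_1 _ _ hμ1] at hμx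
  have hDt : (↑{y ∈ t | μ y ≠ 0} : Set E) ⊆ t := Finset.coe_subset.2 (Finset.filter_subset _ _)
  have hpos : ∀ y ∈ {y ∈ t | μ y ≠ 0}, 0 < μ y := fun y hy =>
    (hμ0 y (Finset.mem_filter.1 hy).1).lt_of_ne' (Finset.mem_filter.1 hy).2
  have hsum : ∑ y ∈ t with μ y ≠ 0, μ y = 1 := by rwa [Finset.sum_filter_ne_zero]
  have hcomb : ∑ y ∈ t with μ y ≠ 0, μ y • y = x := by
    rwa [Finset.sum_filter_of_ne fun y _ h => left_ne_zero_of_smul h]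
  refine ⟨_, hDt.trans hts, hind.mono hDt, ?_, μ, hpos, hsum, hcomb⟩
  rw [← hcomb]
  exact (convex_convexHull ℝ _).sum_mem (fun y hy => (hpos y hy).le) hsum
    fun y hy => subset_convexHull ℝ _ hy

/-- `w` lies in the relative interior of `conv D`, and `0 < α c` says that `a` lies on the same
side of the hyperplane `aff D` as `c`. -/
theorem eventually_lineMap_mem_convexHull_insert {D : Finset E} {μ α : E → ℝ} {w a c : E}
    (haD : a ∉ D) (hμ : ∀ x ∈ D, 0 < μ x) (hμ1 : ∑ x ∈ D, μ x = 1)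
    (hw : ∑ x ∈ D, μ x • x = w) (hαc : 0 < α c) (hα1 : α c + ∑ x ∈ D, α x = 1)
    (ha : α c • c + ∑ x ∈ D, α x • x = a) :
    ∀ᶠ ε in 𝓝[>] (0 : ℝ), lineMap w c ε ∈ convexHull ℝ (insert a (D : Set E)) := by
  classical
  have hD : ∀ᶠ ε in 𝓝 (0 : ℝ), ∀ x ∈ D, 0 < (1 - ε) * μ x - ε / α c * α x := by
    refine (Finset.eventually_all D).2 fun x hx => ?_
    have hlim : Tendsto (fun ε : ℝ => (1 - ε) * μ x - ε / α c * α x) (𝓝 0) (𝓝 (μ x)) := by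
      simpa using ((by fun_prop : Continuous fun ε : ℝ => (1 - ε) * μ x - ε / α c * α x).tendsto 0)
    exact hlim.eventually_const_lt (hμ x hx)
  filter_upwards [hD.filter_mono nhdsWithin_le_nhds, self_mem_nhdsWithin] with ε hε (hε0 : 0 < ε)
  -- `ω` writes `lineMap w c ε` as a convex combination, solving `ha` for `c`
  let ω : E → ℝ := fun x => if x = a then ε / α c else (1 - ε) * μ x - ε / α c * α x
  have hωD : ∀ x ∈ D, ω x = (1 - ε) * μ x - ε / α c * α x := fun x hx =>
    if_neg (ne_of_mem_of_not_mem hx haD)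
  have hωa : ω a = ε / α c := if_pos rfl
  have hsum : ∑ x ∈ insert a D, ω x = 1 := by
    rw [Finset.sum_insert haD, hωa, Finset.sum_congr rfl hωD, Finset.sum_sub_distrib,
      ← Finset.mul_sum, ← Finset.mul_sum, hμ1, eq_sub_of_add_eq' hα1]
    field_simp
    ring
  have hcomb : ∑ x ∈ insert a D, ω x • x = lineMap w c ε := by
    rw [Finset.sum_insert haD, hωa, Finset.sum_congr rfl fun x hx => by
      rw [hωD x hx, sub_smul, mul_smul, mul_smul], Finset.sum_sub_distrib, ← Finset.smul_sum,
      ← Finset.smul_sum, hw, eq_sub_of_add_eq' ha, lineMap_apply_module]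
    match_scalars
    · ring
    · ring
    · field_simp
  rw [← hcomb]
  refine (convex_convexHull ℝ _).sum_mem (fun x hx => ?_) hsum
    fun x hx => subset_convexHull ℝ _ (by simpa using hx)
  rcases Finset.mem_insert.1 hx with rfl | hx
  · rw [hωa]; positivity
  · rw [hωD x hx]; exact (hε x hx).le

theorem AffineBasis.exists_finset_weights {C : Finset E} (b : AffineBasis C ℝ E)
    (hb : ∀ i, b i = i) (a : E) :
    ∃ α : E → ℝ, (∀ i : C, α i = b.coord i a) ∧ ∑ x ∈ C, α x = 1 ∧ ∑ x ∈ C, α x • x = a := by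
  classical
  refine ⟨fun x => if hx : x ∈ C then b.coord ⟨x, hx⟩ a else 0, fun i => dif_pos i.2, ?_, ?_⟩
  · rw [← Finset.sum_coe_sort C]
    simpa using b.sum_coord_apply_eq_one a
  · rw [← Finset.sum_coe_sort C]
    simpa [hb] using b.linear_combination_coord_eq_self a

theorem AffineBasis.coord_apply_of_mem [DecidableEq E] {C : Finset E} (b : AffineBasis C ℝ E)
    (hb : ∀ i, b i = i) (i : C) {x : E} (hx : x ∈ C) : b.coord i x = if x = i then 1 else 0 := by
  split_ifs with hxi
  · simpa [hb, hxi] using b.coord_apply_eq i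
  · simpa [hb] using b.coord_apply_ne (j := ⟨x, hx⟩) fun h => hxi (congrArg Subtype.val h).symm

/-- The hyperplane through the facet `D` opposite `c` supports a convex set `K ⊇ D` if the
segment from a relative-interior point `w` of `conv D` towards `c` leaves `K` at once. -/
theorem AffineBasis.coord_nonpos_of_eventually_lineMap_notMem [DecidableEq E] {K : Set E}
    (hK : Convex ℝ K) {D : Finset E} {c w : E} (hcD : c ∉ D) (b : AffineBasis ↥(insert c D) ℝ E)
    (hb : ∀ i, b i = i) {μ : E → ℝ} (hμ : ∀ x ∈ D, 0 < μ x) (hμ1 : ∑ x ∈ D, μ x = 1)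
    (hw : ∑ x ∈ D, μ x • x = w) (hDK : ↑D ⊆ K)
    (hexit : ∀ᶠ ε in 𝓝[>] (0 : ℝ), lineMap w c ε ∉ K) {a : E} (ha : a ∈ K) :
    b.coord ⟨c, Finset.mem_insert_self c D⟩ a ≤ 0 := by
  by_contra! hpos
  obtain ⟨α, hαb, hα1, hαa⟩ := b.exists_finset_weights hb a
  rw [Finset.sum_insert hcD] at hα1 hαa
  have haD : a ∉ D := fun haD => by
    have := b.coord_apply_of_mem hb ⟨c, Finset.mem_insert_self c D⟩ (Finset.mem_insert_of_mem haD)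
    rw [if_neg (ne_of_mem_of_not_mem haD hcD)] at this
    exact hpos.ne' this
  have hin := eventually_lineMap_mem_convexHull_insert haD hμ hμ1 hw
    (by rwa [hαb ⟨c, Finset.mem_insert_self c D⟩]) hα1 hαa
  obtain ⟨ε, hεin, hεout⟩ := (hin.and hexit).exists
  exact hεout (convexHull_min (Set.insert_subset ha hDK) hK hεin)

end Convexity

section Topology

variable {E : Type*} [AddCommGroup E] [Module ℝ E] [TopologicalSpace E]
  [IsTopologicalAddGroup E] [ContinuousSMul ℝ E]

theorem IsClosed.exists_wbtw_forall_lineMap_notMem {K : Set E} (hK : IsClosed K) {x y : E}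
    (hx : x ∈ K) (hy : y ∉ K) :
    ∃ w ∈ K, Wbtw ℝ x w y ∧ ∀ ε ∈ Set.Ioc (0 : ℝ) 1, lineMap w y ε ∉ K := by
  have hT : IsCompact (Set.Icc (0 : ℝ) 1 ∩ lineMap x y ⁻¹' K) :=
    isCompact_Icc.inter_right (hK.preimage lineMap_continuous)
  obtain ⟨t, ⟨ht, hwK⟩, hmax⟩ :=
    hT.exists_isGreatest ⟨0, Set.left_mem_Icc.2 zero_le_one, by simpa using hx⟩
  refine ⟨lineMap x y t, hwK, ⟨t, ht, rfl⟩, fun ε hε hεK => ?_⟩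
  rw [lineMap_lineMap_left] at hεK
  have hIcc : 1 - (1 - ε) * (1 - t) ∈ Set.Icc (0 : ℝ) 1 :=
    ⟨by nlinarith [ht.1, ht.2, hε.1, hε.2], by nlinarith [ht.1, ht.2, hε.1, hε.2]⟩
  have hle := hmax ⟨hIcc, hεK⟩
  obtain rfl : t = 1 := le_antisymm ht.2 (by nlinarith [hε.1])
  exact hy (by simpa using hwK)

theorem notMem_interior_of_forall_lineMap_notMem {K : Set E} {w y : E}
    (h : ∀ ε ∈ Set.Ioc (0 : ℝ) 1, lineMap w y ε ∉ K) : w ∉ interior K := by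
  intro hw
  have hlim : Tendsto (lineMap w y) (𝓝[>] (0 : ℝ)) (𝓝 w) := by
    simpa using (lineMap_continuous.tendsto (0 : ℝ)).mono_left nhdsWithin_le_nhds
  obtain ⟨ε, hεK, hε⟩ :=
    ((hlim.eventually (isOpen_interior.mem_nhds hw)).and (Ioc_mem_nhdsGT one_pos)).exists
  exact h ε hε (interior_subset hεK)

end Topology

section Simplex

variable {E : Type*} [NormedAddCommGroup E] [NormedSpace ℝ E] [FiniteDimensional ℝ E]

theorem card_le_finrank_add_one_of_affineIndependent {D : Finset E}
    (hind : AffineIndependent ℝ ((↑) : D → E)) : #D ≤ Module.finrank ℝ E + 1 := by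
  have := hind.card_le_finrank_succ
  rw [Fintype.card_coe] at this
  exact this.trans (Nat.add_le_add_right (Submodule.finrank_le _) 1)

theorem affineSpan_eq_top_of_card_eq {C : Finset E} (hind : AffineIndependent ℝ ((↑) : C → E))
    (hcard : #C = Module.finrank ℝ E + 1) : affineSpan ℝ (C : Set E) = ⊤ := by
  rw [← Subtype.range_coe (s := (C : Set E))]
  exact hind.affineSpan_eq_top_iff_card_eq_finrank_add_one.2 (by rwa [Fintype.card_coe])

theorem exists_affineBasis_of_card_eq {C : Finset E} (hind : AffineIndependent ℝ ((↑) : C → E))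
    (hcard : #C = Module.finrank ℝ E + 1) : ∃ b : AffineBasis C ℝ E, ∀ i, b i = i :=
  ⟨⟨(↑), hind, by rw [Subtype.range_coe]; exact affineSpan_eq_top_of_card_eq hind hcard⟩,
    fun _ => rfl⟩

theorem mem_interior_convexHull_of_pos_weights {C : Finset E}
    (hind : AffineIndependent ℝ ((↑) : C → E)) (hcard : #C = Module.finrank ℝ E + 1)
    {μ : E → ℝ} (hμ : ∀ y ∈ C, 0 < μ y) (hμ1 : ∑ y ∈ C, μ y = 1) {x : E}
    (hx : ∑ y ∈ C, μ y • y = x) : x ∈ interior (convexHull ℝ (C : Set E)) := by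
  obtain ⟨b, hb⟩ := exists_affineBasis_of_card_eq hind hcard
  have hsum : ∑ i : C, μ i = 1 := by rwa [Finset.sum_coe_sort C μ]
  have hxb : Finset.univ.affineCombination ℝ b (fun i => μ i) = x := by
    rw [Finset.univ.affineCombination_eq_linear_combination _ _ hsum, ← hx,
      ← Finset.sum_coe_sort C]
    simp only [hb]
  have hrange : Set.range b = C := by ext; simp [hb]
  rw [← hrange, b.interior_convexHull]
  intro i
  rw [← hxb, b.coord_apply_combination_of_mem (Finset.mem_univ i) hsum]
  exact hμ i i.2

theorem exists_pos_weights_card_le_finrank_of_notMem_interior {A : Set E} {w : E}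
    (hw : w ∈ convexHull ℝ A) (hwA : w ∉ interior (convexHull ℝ A)) :
    ∃ D : Finset E, ↑D ⊆ A ∧ #D ≤ Module.finrank ℝ E ∧ w ∈ convexHull ℝ ↑D ∧
      ∃ μ : E → ℝ, (∀ y ∈ D, 0 < μ y) ∧ ∑ y ∈ D, μ y = 1 ∧ ∑ y ∈ D, μ y • y = w := by
  obtain ⟨D, hDA, hind, hwD, μ, hμ, hμ1, hμw⟩ :=
    exists_affineIndependent_pos_weights_of_mem_convexHull hw
  refine ⟨D, hDA, ?_, hwD, μ, hμ, hμ1, hμw⟩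
  by_contra! hcard
  have hcard : #D = Module.finrank ℝ E + 1 :=
    le_antisymm (card_le_finrank_add_one_of_affineIndependent hind) hcard
  exact hwA (interior_mono (convexHull_mono hDA)
    (mem_interior_convexHull_of_pos_weights hind hcard hμ hμ1 hμw))

end Simplex

section Counting

theorem ncard_le_mul_ncard_of_injOn {α β : Type*} {𝒜 : Set α} {𝒞 : Set (Set β)}
    (h𝒜 : 𝒜.Finite) (h𝒞 : 𝒞.Finite) (C : α → Finset β) (c : α → β) {n : ℕ}
    (hC : ∀ A ∈ 𝒜, ↑(C A) ∈ 𝒞) (hc : ∀ A ∈ 𝒜, c A ∈ C A) (hcard : ∀ A ∈ 𝒜, #(C A) ≤ n)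
    (hinj : ∀ A ∈ 𝒜, ∀ A' ∈ 𝒜, C A = C A' → c A = c A' → A = A') :
    𝒜.ncard ≤ n * 𝒞.ncard := by
  rw [Set.ncard_eq_toFinset_card _ h𝒜, Set.ncard_eq_toFinset_card _ h𝒞]
  refine Finset.card_le_mul_card_image_of_maps_to (f := fun A => (C A : Set β))
    (fun A hA => h𝒞.mem_toFinset.2 (hC A (h𝒜.mem_toFinset.1 hA))) n fun C' _ => ?_
  obtain hempty | ⟨A₀, hA₀⟩ := {A ∈ h𝒜.toFinset | (C A : Set β) = C'}.eq_empty_or_nonempty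
  · simp [hempty]
  simp only [Finset.mem_filter, Set.Finite.mem_toFinset] at hA₀
  have hfiber : ∀ A ∈ {A ∈ h𝒜.toFinset | (C A : Set β) = C'}, A ∈ 𝒜 ∧ C A = C A₀ :=
    fun A hA => by
      simp only [Finset.mem_filter, Set.Finite.mem_toFinset] at hA
      exact ⟨hA.1, Finset.coe_injective (hA.2.trans hA₀.2.symm)⟩
  calc #{A ∈ h𝒜.toFinset | (C A : Set β) = C'}
      ≤ #(C A₀) := Finset.card_le_card_of_injOn c
        (fun A hA => (hfiber A hA).2 ▸ hc A (hfiber A hA).1)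
        fun A hA A' hA' hcc => hinj A (hfiber A hA).1 A' (hfiber A' hA').1
          ((hfiber A hA).2.trans (hfiber A' hA').2.symm) hcc
    _ ≤ n := hcard A₀ hA₀.1

end Counting

section GeneralPosition

variable {d : ℕ} {z : Pt d} {S : Set (Pt d)}

theorem GenPos.lt_card_of_mem_affineSpan (hgen : GenPos d z S) {Y : Finset (Pt d)}
    (hYS : ↑Y ⊆ S) (hz : z ∈ affineSpan ℝ (Y : Set (Pt d))) : d < #Y := by
  by_contra! hY
  obtain rfl | hne := Y.eq_empty_or_nonempty
  · exact AffineSubspace.notMem_bot ℝ _ z (by simpa using hz)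
  obtain ⟨n, hn⟩ := Nat.exists_eq_succ_of_ne_zero hne.card_pos.ne'
  have hrank := finrank_vectorSpan_image_finset_le ℝ id Y hn
  rw [Finset.image_id] at hrank
  exact hgen _ hYS (by omega) hz

theorem GenPos.exists_simplex_subset (hgen : GenPos d z S) {X : Set (Pt d)} (hXS : X ⊆ S)
    (hz : z ∈ convexHull ℝ X) :
    ∃ C : Finset (Pt d), ↑C ⊆ X ∧ #C = d + 1 ∧ AffineIndependent ℝ ((↑) : C → Pt d) ∧
      z ∈ interior (convexHull ℝ (C : Set (Pt d))) := by
  obtain ⟨C, hCX, hind, hzC, μ, hμ, hμ1, hμz⟩ :=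
    exists_affineIndependent_pos_weights_of_mem_convexHull hz
  have hcard : #C = d + 1 := by
    have := card_le_finrank_add_one_of_affineIndependent hind
    have := hgen.lt_card_of_mem_affineSpan (hCX.trans hXS) (convexHull_subset_affineSpan _ hzC)
    simp only [finrank_euclideanSpace_fin] at *
    omega
  exact ⟨C, hCX, hcard, hind,
    mem_interior_convexHull_of_pos_weights hind (by simpa using hcard) hμ hμ1 hμz⟩

theorem GenPos.notMem_convexHull_of_isZAvoiding (hgen : GenPos d z S) {A : Set (Pt d)}
    (hAS : A ⊆ S) (hA : IsZAvoiding d z A) : z ∉ convexHull ℝ A := fun hz =>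
  let ⟨_, hCA, _, _, hzC⟩ := hgen.exists_simplex_subset hAS hz
  hA (interior_mono (convexHull_mono hCA) hzC)

theorem GenPos.card_eq_and_affineIndependent_of_mem_minContaining (hgen : GenPos d z S)
    {C : Finset (Pt d)} (hC : ↑C ∈ MinContaining d z S) :
    #C = d + 1 ∧ AffineIndependent ℝ ((↑) : C → Pt d) := by
  obtain ⟨hCS, hzC, hmin⟩ := hC
  obtain ⟨C', hC'C, hcard, hind, hzC'⟩ := hgen.exists_simplex_subset hCS (interior_subset hzC)
  obtain rfl : C' = C := by
    by_contra hne
    exact hmin _ (Set.ssubset_iff_subset_ne.2 ⟨hC'C, Finset.coe_injective.ne hne⟩) hzC'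
  exact ⟨hcard, hind⟩

theorem GenPos.mem_minContaining_of_card_le (hgen : GenPos d z S) {C : Finset (Pt d)}
    (hCS : ↑C ⊆ S) (hcard : #C ≤ d + 1) (hz : z ∈ convexHull ℝ (C : Set (Pt d))) :
    ↑C ∈ MinContaining d z S := by
  obtain ⟨C', hC'C, hcard', -, hzC'⟩ := hgen.exists_simplex_subset hCS hz
  obtain rfl : C' = C := Finset.eq_of_subset_of_card_le (Finset.coe_subset.1 hC'C) (by omega)
  refine ⟨hCS, hzC', fun Y hYC hzY => ?_⟩
  obtain ⟨Y', hY'Y, hcardY', -, -⟩ :=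
    hgen.exists_simplex_subset (hYC.1.trans hCS) (interior_subset hzY)
  have := Finset.card_lt_card (Finset.coe_ssubset.1 (hY'Y.trans_ssubset hYC))
  omega

theorem eq_setOf_lt_of_mem_maxAvoiding {A : Set (Pt d)} (hA : A ∈ MaxAvoiding d z S)
    (f : Pt d →ᵃ[ℝ] ℝ) (hf : ∀ a ∈ A, f a < f z) : A = {s ∈ S | f s < f z} := by
  obtain ⟨hAS, -, hmax⟩ := hA
  have hAB : A ⊆ {s ∈ S | f s < f z} := fun a ha => ⟨hAS ha, hf a ha⟩
  by_contra hne
  refine hmax _ (fun s hs => hs.1) (Set.ssubset_iff_subset_ne.2 ⟨hAB, hne⟩) fun hz => ?_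
  have hsub : convexHull ℝ {s ∈ S | f s < f z} ⊆ f ⁻¹' Set.Iio (f z) :=
    convexHull_min (fun s hs => hs.2) ((convex_Iio _).affine_preimage f)
  exact lt_irrefl (f z) (hsub (interior_subset hz))

end GeneralPosition

section Charging

variable {d : ℕ} {z : Pt d} {S : Set (Pt d)}

/-- `w` is the point where the ray from `c ∉ A` through `z` enters `conv A`. -/
theorem GenPos.exists_wbtw_of_mem_maxAvoiding (hgen : GenPos d z S) (hS : S.Finite)
    (hzS : z ∉ S) (hScont : IsZContaining d z S) {A : Set (Pt d)}
    (hA : A ∈ MaxAvoiding d z S) :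
    ∃ c ∈ S, ∃ w ∈ convexHull ℝ A, Wbtw ℝ w z c ∧
      ∀ ε ∈ Set.Ioc (0 : ℝ) 1, lineMap w z ε ∉ convexHull ℝ A := by
  obtain ⟨hAS, hAv, hmax⟩ := hA
  obtain ⟨c, hcS, hcA⟩ : ∃ c ∈ S, c ∉ A :=
    Set.not_subset.1 fun hSA => hAv (by rwa [hAS.antisymm hSA])
  have hzcA : z ∈ convexHull ℝ (insert c A) :=
    interior_subset (not_not.1 (hmax _ (Set.insert_subset hcS hAS) (Set.ssubset_insert hcA)))
  obtain rfl | hAne := A.eq_empty_or_nonempty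
  · rw [insert_empty_eq, convexHull_singleton, Set.mem_singleton_iff] at hzcA
    exact absurd (hzcA ▸ hcS) hzS
  rw [convexHull_insert hAne, mem_convexJoin] at hzcA
  obtain ⟨_, hc, x, hxA, hzx⟩ := hzcA
  rw [Set.mem_singleton_iff.1 hc] at hzx
  obtain ⟨w, hwA, hxwz, hexit⟩ :=
    ((hS.subset hAS).isClosed_convexHull ℝ).exists_wbtw_forall_lineMap_notMem hxA
      (hgen.notMem_convexHull_of_isZAvoiding hAS hAv)
  exact ⟨c, hcS, w, hwA, (mem_segment_iff_wbtw.1 hzx).symm.trans_left_right hxwz, hexit⟩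

theorem GenPos.insert_mem_minContaining_of_wbtw (hgen : GenPos d z S) {c : Pt d} (hcS : c ∈ S)
    {D : Finset (Pt d)} (hDS : ↑D ⊆ S) (hDcard : #D ≤ d) {w : Pt d}
    (hwD : w ∈ convexHull ℝ (D : Set (Pt d))) (hwzc : Wbtw ℝ w z c) :
    ↑(insert c D) ∈ MinContaining d z S := by
  have hCS : ↑(insert c D) ⊆ S := by
    rw [Finset.coe_insert]; exact Set.insert_subset hcS hDS
  have hzC : z ∈ convexHull ℝ (↑(insert c D) : Set (Pt d)) :=
    (convex_convexHull ℝ _).segment_subset (convexHull_mono (by simp) hwD)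
      (subset_convexHull ℝ _ (by simp)) (mem_segment_iff_wbtw.2 hwzc)
  exact hgen.mem_minContaining_of_card_le hCS ((Finset.card_insert_le c D).trans (by omega)) hzC

/-- The facet of `C` opposite `c` spans a hyperplane separating `A` from `z`. -/
theorem GenPos.exists_minContaining_vertex_of_mem_maxAvoiding (hgen : GenPos d z S)
    (hS : S.Finite) (hzS : z ∉ S) (hScont : IsZContaining d z S) {A : Set (Pt d)}
    (hA : A ∈ MaxAvoiding d z S) :
    ∃ C : Finset (Pt d), ↑C ∈ MinContaining d z S ∧ ∃ c ∈ C, ∃ f : Pt d →ᵃ[ℝ] ℝ,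
      (∀ x ∈ C, f x = if x = c then 1 else 0) ∧ A = {s ∈ S | f s < f z} := by
  obtain ⟨c, hcS, w, hwA, hwzc, hexit⟩ := hgen.exists_wbtw_of_mem_maxAvoiding hS hzS hScont hA
  obtain ⟨D, hDA, hDcard, hwD, μ, hμ, hμ1, hμw⟩ :=
    exists_pos_weights_card_le_finrank_of_notMem_interior hwA
      (notMem_interior_of_forall_lineMap_notMem hexit)
  rw [finrank_euclideanSpace_fin] at hDcard
  have hCmem := hgen.insert_mem_minContaining_of_wbtw hcS (hDA.trans hA.1) hDcard hwD hwzc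
  obtain ⟨hcard, hind⟩ := hgen.card_eq_and_affineIndependent_of_mem_minContaining hCmem
  have hcD : c ∉ D := fun hc => by rw [Finset.insert_eq_of_mem hc] at hcard; omega
  obtain ⟨b, hb⟩ := exists_affineBasis_of_card_eq hind (by simpa using hcard)
  have hc := Finset.mem_insert_self c D
  have hf : ∀ x ∈ insert c D, b.coord ⟨c, hc⟩ x = if x = c then 1 else 0 :=
    fun x hx => b.coord_apply_of_mem hb _ hx
  obtain ⟨θ, ⟨hθ0, -⟩, hz⟩ := hwzc
  have hfz : b.coord ⟨c, hc⟩ z = θ := by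
    have hfw : b.coord ⟨c, hc⟩ w = 0 := convexHull_min (t := b.coord ⟨c, hc⟩ ⁻¹' {0})
      (fun x hx => by simp [hf x (Finset.mem_insert_of_mem hx), ne_of_mem_of_not_mem hx hcD])
      ((convex_singleton 0).affine_preimage _) hwD
    rw [← hz, AffineMap.apply_lineMap, hfw, hf c hc, if_pos rfl]
    simp [lineMap_apply]
  have hθ : 0 < θ := by
    refine hθ0.lt_of_ne' fun hθ => hexit 1 ⟨one_pos, le_rfl⟩ ?_
    rwa [lineMap_apply_one, ← hz, hθ, lineMap_apply_zero]
  have hout : ∀ᶠ ε in 𝓝[>] (0 : ℝ), lineMap w c ε ∉ convexHull ℝ A := by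
    filter_upwards [Ioo_mem_nhdsGT hθ] with ε hε
    rw [show lineMap w c ε = lineMap w z (ε / θ) by
      rw [← hz, lineMap_lineMap_right, div_mul_cancel₀ _ hθ.ne']]
    exact hexit _ ⟨div_pos hε.1 hθ, (div_le_one hθ).2 hε.2.le⟩
  refine ⟨insert c D, hCmem, c, hc, b.coord ⟨c, hc⟩, hf,
    eq_setOf_lt_of_mem_maxAvoiding hA _ fun a ha => ?_⟩
  rw [hfz]
  exact (b.coord_nonpos_of_eventually_lineMap_notMem (convex_convexHull ℝ A) hcD hb
    hμ hμ1 hμw (hDA.trans (subset_convexHull ℝ A)) hout (subset_convexHull ℝ A ha)).trans_lt hθ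

end Charging

theorem maxAvoiding_card_le_d_add_one_mul_minContaining_card
    (d : ℕ) (S : Set (Pt d)) (hS : S.Finite) (z : Pt d) (hzS : z ∉ S)
    (hScont : IsZContaining d z S) (hgen : GenPos d z S) :
    (MaxAvoiding d z S).ncard ≤ (d + 1) * (MinContaining d z S).ncard := by
  choose! C hC c hc f hf hAf using fun A (hA : A ∈ MaxAvoiding d z S) =>
    hgen.exists_minContaining_vertex_of_mem_maxAvoiding hS hzS hScont hA
  refine ncard_le_mul_ncard_of_injOn (hS.finite_subsets.subset fun A hA => hA.1)
    (hS.finite_subsets.subset fun C hC => hC.1) C c hC hc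
    (fun A hA => (hgen.card_eq_and_affineIndependent_of_mem_minContaining (hC A hA)).1.le)
    fun A hA A' hA' hCC hcc => ?_
  obtain ⟨hcard, hind⟩ := hgen.card_eq_and_affineIndependent_of_mem_minContaining (hC A hA)
  have hff : f A = f A' :=
    AffineMap.ext_on (affineSpan_eq_top_of_card_eq hind (by simpa using hcard)) fun x hx => by
      rw [hf A hA x hx, hf A' hA' x (hCC ▸ hx), hcc]
  rw [hAf A hA, hAf A' hA', hff]
end

section
/- Let S be a finite set of points in ℝ^d and let z ∈ ℝ^d \ S be in general position with respect to S. If either S is z-avoiding, or S is z-containing and |S| = d + 1, then |A(S)| = d·|C(S)| + 1. -/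
open Module

theorem interior_convexHull_eq_empty_of_ncard_le {V : Type*} [NormedAddCommGroup V]
    [NormedSpace ℝ V] {X : Set V} (hX : X.Finite) (h : X.ncard ≤ finrank ℝ V) :
    interior (convexHull ℝ X) = ∅ := by
  rcases X.eq_empty_or_nonempty with rfl | hne
  · simp
  by_contra hint
  have hspan : vectorSpan ℝ X = ⊤ := by
    rw [← direction_affineSpan,
      affineSpan_eq_top_of_nonempty_interior (Set.nonempty_iff_ne_empty.2 hint),
      AffineSubspace.direction_top]
  have hrank : finrank ℝ (vectorSpan ℝ X) + 1 ≤ X.ncard := by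
    have := hX.fintype
    have := hne.to_subtype
    have := finrank_vectorSpan_range_add_one_le ℝ ((↑) : X → V)
    rwa [Subtype.range_coe, ← Nat.card_eq_fintype_card, Nat.card_coe_set_eq] at this
  rw [hspan, finrank_top] at hrank
  omega

theorem Set.ncard_image_diff_singleton {α : Type*} (S : Set α) :
    ((fun x => S \ {x}) '' S).ncard = S.ncard := by
  refine Set.InjOn.ncard_image fun x hx y _ hxy => by_contra fun hne => ?_
  have hx' : x ∈ S \ {y} := ⟨hx, hne⟩
  rw [← hxy] at hx'
  exact hx'.2 rfl

section

variable {d : ℕ} {z : Pt d} {S : Set (Pt d)}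

theorem minContaining_eq_empty (h : IsZAvoiding d z S) : MinContaining d z S = ∅ :=
  Set.eq_empty_of_forall_notMem fun _ ⟨hCS, hC, _⟩ =>
    h (interior_mono (convexHull_mono hCS) hC)

theorem maxAvoiding_eq_singleton_self (h : IsZAvoiding d z S) : MaxAvoiding d z S = {S} := by
  ext A
  constructor
  · rintro ⟨hAS, -, hmax⟩
    by_contra hne
    exact hmax S le_rfl (hAS.ssubset_of_ne hne) h
  · rintro rfl
    exact ⟨le_rfl, h, fun B hBS hSB _ => hSB.2 hBS⟩

theorem minContaining_eq_singleton_self (hS : S ∈ MinContaining d z S) :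
    MinContaining d z S = {S} := by
  ext C
  constructor
  · rintro ⟨hCS, hC, -⟩
    by_contra hne
    exact hS.2.2 C (hCS.ssubset_of_ne hne) hC
  · rintro rfl
    exact hS

theorem maxAvoiding_eq_image_diff_singleton (hS : S ∈ MinContaining d z S) :
    MaxAvoiding d z S = (fun x => S \ {x}) '' S := by
  have hfacet : ∀ x ∈ S, IsZAvoiding d z (S \ {x}) := fun x hx =>
    hS.2.2 _ (Set.sdiff_singleton_ssubset.mpr hx)
  ext A
  constructor
  · rintro ⟨hAS, hA, hmax⟩
    obtain ⟨x, hxS, hxA⟩ := Set.exists_of_ssubset (hAS.ssubset_of_ne fun h => hA (h ▸ hS.2.1))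
    have hAx : A ⊆ S \ {x} := fun y hy => ⟨hAS hy, fun h => hxA (h ▸ hy)⟩
    refine ⟨x, hxS, ?_⟩
    by_contra hne
    exact hmax _ Set.sdiff_subset (hAx.ssubset_of_ne (Ne.symm hne)) (hfacet x hxS)
  · rintro ⟨x, hxS, rfl⟩
    refine ⟨Set.sdiff_subset, hfacet x hxS, fun B hBS hfacetB hB => hB ?_⟩
    have hxB : x ∈ B := by_contra fun hx => hfacetB.2 fun y hy => ⟨hBS hy, fun h => hx (h ▸ hy)⟩
    have hBeq : B = S := hBS.antisymm fun y hy => by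
      by_cases hyx : y = x
      · exact hyx ▸ hxB
      · exact hfacetB.1 ⟨hy, hyx⟩
    rw [hBeq]
    exact hS.2.1

theorem mem_minContaining_self_of_ncard_eq (hS : IsZContaining d z S) (hcard : S.ncard = d + 1) :
    S ∈ MinContaining d z S := by
  have hfin : S.Finite := Set.finite_of_ncard_pos (by omega)
  refine ⟨le_rfl, hS, fun Y hYS hY => ?_⟩
  have hYcard : Y.ncard ≤ finrank ℝ (Pt d) := by
    have := Set.ncard_lt_ncard hYS hfin
    rw [finrank_euclideanSpace_fin]
    omega
  rw [IsZContaining, interior_convexHull_eq_empty_of_ncard_le (hfin.subset hYS.1) hYcard] at hY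
  exact hY

end

theorem maxAvoiding_card_eq_of_avoiding_or_simplex_general
    (d : ℕ) (S : Set (Pt d)) (z : Pt d)
    (hcase : IsZAvoiding d z S ∨ (IsZContaining d z S ∧ S.ncard = d + 1)) :
    (MaxAvoiding d z S).ncard = d * (MinContaining d z S).ncard + 1 := by
  rcases hcase with hA | ⟨hC, hcard⟩
  · rw [maxAvoiding_eq_singleton_self hA, minContaining_eq_empty hA]
    simp
  · have hmin := mem_minContaining_self_of_ncard_eq hC hcard
    rw [maxAvoiding_eq_image_diff_singleton hmin, minContaining_eq_singleton_self hmin,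
      Set.ncard_image_diff_singleton, hcard, Set.ncard_singleton]
    ring

theorem maxAvoiding_card_eq_of_avoiding_or_simplex
    (d : ℕ) (S : Set (Pt d)) (hS : S.Finite) (z : Pt d) (hzS : z ∉ S)
    (hgen : GenPos d z S)
    (hcase : IsZAvoiding d z S ∨ (IsZContaining d z S ∧ S.ncard = d + 1)) :
    (MaxAvoiding d z S).ncard = d * (MinContaining d z S).ncard + 1 :=
  maxAvoiding_card_eq_of_avoiding_or_simplex_general d S z hcase
end

section
/- Let S be a finite set of points in ℝ^d and let z ∈ ℝ^d \ S be in general position with respect to S. If S is z-containing and |S| = d + 2, then |A(S)| = d·|C(S)| − d + 1. -/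
/-!
The convex weights of `z` on the `d + 2` points of `S` form a segment. Indeed, by general position
any `d + 1` of the points whose hull contains `z` are affinely independent, so the affine relations
among all `d + 2` points form a line; and no convex weight vector vanishes at two points, since `z`
is not in the hull of `d` of them. Hence each end of the segment vanishes at exactly one point, `p`
and `q`, and the weights in between vanish nowhere: `S \ {p}` and `S \ {q}` are the only
`(d + 1)`-subsets whose hull contains `z`, and by general position they contain `z` in the interior
of their hull. Thus `𝒞(S) = {S \ {p}, S \ {q}}`, while `𝒜(S)` consists of `S \ {p, q}` and the `d`
sets `S \ {t}` with `t ∉ {p, q}`, and `d + 1 = 2d - d + 1`.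
-/

section ConvexWeights

variable {E : Type*} [AddCommGroup E] [Module ℝ E] {s u : Finset E} {z : E} {w w' β γ : E → ℝ}

structure IsConvexWeights (s : Finset E) (z : E) (w : E → ℝ) : Prop where
  nonneg : ∀ y ∈ s, 0 ≤ w y
  sum_eq_one : ∑ y ∈ s, w y = 1
  sum_smul_eq : ∑ y ∈ s, w y • y = z

structure IsAffineRelation (s : Finset E) (β : E → ℝ) : Prop where
  sum_eq_zero : ∑ y ∈ s, β y = 0
  sum_smul_eq_zero : ∑ y ∈ s, β y • y = 0

lemma IsAffineRelation.smul (hβ : IsAffineRelation s β) (c : ℝ) :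
    IsAffineRelation s (c • β) where
  sum_eq_zero := by simp [← Finset.mul_sum, hβ.sum_eq_zero]
  sum_smul_eq_zero := by simp [mul_smul, ← Finset.smul_sum, hβ.sum_smul_eq_zero]

lemma IsAffineRelation.neg (hβ : IsAffineRelation s β) : IsAffineRelation s (-β) := by
  simpa using hβ.smul (-1)

lemma IsAffineRelation.sub (hβ : IsAffineRelation s β) (hγ : IsAffineRelation s γ) :
    IsAffineRelation s (β - γ) where
  sum_eq_zero := by simp [Finset.sum_sub_distrib, hβ.sum_eq_zero, hγ.sum_eq_zero]
  sum_smul_eq_zero := by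
    simp [sub_smul, Finset.sum_sub_distrib, hβ.sum_smul_eq_zero, hγ.sum_smul_eq_zero]

lemma IsConvexWeights.sub (hw : IsConvexWeights s z w) (hw' : IsConvexWeights s z w') :
    IsAffineRelation s (w - w') where
  sum_eq_zero := by simp [Finset.sum_sub_distrib, hw.sum_eq_one, hw'.sum_eq_one]
  sum_smul_eq_zero := by
    simp [sub_smul, Finset.sum_sub_distrib, hw.sum_smul_eq, hw'.sum_smul_eq]

lemma IsConvexWeights.sub_smul (hw : IsConvexWeights s z w) (hβ : IsAffineRelation s β) {c : ℝ}
    (hc : ∀ y ∈ s, c * β y ≤ w y) : IsConvexWeights s z (w - c • β) where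
  nonneg y hy := by simpa using hc y hy
  sum_eq_one := by
    simp only [Pi.sub_apply, Pi.smul_apply, smul_eq_mul, Finset.sum_sub_distrib, ← Finset.mul_sum,
      hw.sum_eq_one, hβ.sum_eq_zero, mul_zero, sub_zero]
  sum_smul_eq := by
    simp only [Pi.sub_apply, Pi.smul_apply, _root_.sub_smul, smul_assoc, Finset.sum_sub_distrib,
      ← Finset.smul_sum]
    rw [hw.sum_smul_eq, hβ.sum_smul_eq_zero, smul_zero, sub_zero]

lemma IsConvexWeights.exists_sub_smul (hw : IsConvexWeights s z w) (hβ : IsAffineRelation s β)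
    (hpos : ∃ y ∈ s, 0 < β y) :
    ∃ p ∈ s, 0 < β p ∧ IsConvexWeights s z (w - (w p / β p) • β) ∧
      (w - (w p / β p) • β) p = 0 := by
  obtain ⟨p, hp, hmin⟩ := Finset.exists_min_image (s.filter (0 < β ·)) (fun y => w y / β y)
    (by simpa [Finset.filter_nonempty_iff] using hpos)
  rw [Finset.mem_filter] at hp
  refine ⟨p, hp.1, hp.2, hw.sub_smul hβ fun y hy => ?_, by simp [div_mul_cancel₀ _ hp.2.ne']⟩
  rcases le_or_gt (β y) 0 with hy0 | hy0
  · exact (mul_nonpos_of_nonneg_of_nonpos (div_nonneg (hw.nonneg p hp.1) hp.2.le) hy0).trans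
      (hw.nonneg y hy)
  · exact (le_div_iff₀ hy0).mp (hmin y (Finset.mem_filter.mpr ⟨hy, hy0⟩))

lemma mem_convexHull_iff_exists_isConvexWeights (hus : u ⊆ s) :
    z ∈ convexHull ℝ (u : Set E) ↔ ∃ w, IsConvexWeights s z w ∧ ∀ y ∈ s, y ∉ u → w y = 0 := by
  rw [Finset.mem_convexHull']
  constructor
  · rintro ⟨w, hw0, hw1, hwz⟩
    refine ⟨Set.indicator u w, ⟨fun y _ => Set.indicator_nonneg hw0 y, ?_, ?_⟩, ?_⟩
    · rwa [Finset.sum_indicator_subset w hus]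
    · rwa [← Finset.sum_indicator_subset (fun y => w y • y) hus,
        Finset.sum_congr rfl fun y _ => Set.indicator_smul_apply_left (↑u) w (fun y => y) y] at hwz
    · exact fun y _ hy => Set.indicator_of_notMem (by simpa using hy) w
  · rintro ⟨w, hw, hwu⟩
    refine ⟨w, fun y hy => hw.nonneg y (hus hy), ?_, ?_⟩
    · rw [Finset.sum_subset hus hwu, hw.sum_eq_one]
    · rw [Finset.sum_subset hus (fun y hy hyu => by rw [hwu y hy hyu, zero_smul]), hw.sum_smul_eq]

lemma mem_convexHull_erase_iff_exists_isConvexWeights [DecidableEq E] {t : E} (ht : t ∈ s) :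
    z ∈ convexHull ℝ (↑(s.erase t) : Set E) ↔ ∃ w, IsConvexWeights s z w ∧ w t = 0 := by
  rw [mem_convexHull_iff_exists_isConvexWeights (s.erase_subset t)]
  refine exists_congr fun w => and_congr_right fun _ =>
    ⟨fun h => h t ht (by simp), fun h y hy hyt => ?_⟩
  obtain rfl : y = t := by simpa [hy] using hyt
  exact h

end ConvexWeights

section GeneralPosition

open Module

variable {d : ℕ} {z : Pt d} {S X : Set (Pt d)} {s u : Finset (Pt d)}

lemma GenPos.lt_card_of_mem_convexHull (hgen : GenPos d z ↑s) (hus : u ⊆ s)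
    (hz : z ∈ convexHull ℝ (u : Set (Pt d))) : d < u.card := by
  classical
  by_contra! hud
  obtain ⟨n, hn⟩ : ∃ n, u.card = n + 1 :=
    Nat.exists_eq_succ_of_ne_zero (Finset.card_ne_zero.mpr (by
      by_contra hu; simp [Finset.not_nonempty_iff_eq_empty.mp hu] at hz))
  have hrank := finrank_vectorSpan_image_finset_le ℝ id u hn
  rw [Finset.image_id] at hrank
  exact hgen u hus (by omega) (convexHull_subset_affineSpan _ hz)

lemma GenPos.mem_interior_convexHull (hgen : GenPos d z S) (hX : X ⊆ S)
    (hz : z ∈ convexHull ℝ X) : z ∈ interior (convexHull ℝ X) := by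
  obtain ⟨ι, _, f, w, hfX, hf, hw0, hw1, hwz⟩ := eq_pos_convex_span_of_mem_convexHull hz
  have hzf : z = Finset.univ.affineCombination ℝ f w := by
    rw [Finset.univ.affineCombination_eq_linear_combination _ _ hw1, hwz]
  have : Nonempty ι := by
    by_contra h
    simp [not_nonempty_iff.mp h] at hw1
  have hrank : finrank ℝ (vectorSpan ℝ (Set.range f)) = d := by
    refine le_antisymm ((Submodule.finrank_le _).trans (finrank_euclideanSpace_fin).le) ?_
    refine not_lt.mp fun h => hgen _ (hfX.trans hX) h ?_
    exact hzf ▸ affineCombination_mem_affineSpan hw1 f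
  let b : AffineBasis ι ℝ (Pt d) := ⟨f, hf, hf.affineSpan_eq_top_iff_card_eq_finrank_add_one.mpr
    (by rw [← hf.finrank_vectorSpan_add_one, hrank, finrank_euclideanSpace_fin])⟩
  refine interior_mono (convexHull_mono hfX) ?_
  change z ∈ interior (convexHull ℝ (Set.range b))
  rw [b.interior_convexHull]
  intro i
  have := b.coord_apply_combination_of_mem (Finset.mem_univ i) hw1
  exact hzf ▸ this ▸ hw0 i

lemma GenPos.isZContaining_iff (hgen : GenPos d z S) (hX : X ⊆ S) :
    IsZContaining d z X ↔ z ∈ convexHull ℝ X :=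
  ⟨fun h => interior_subset h, hgen.mem_interior_convexHull hX⟩

end GeneralPosition

section CircuitOfDPlusTwoPoints

variable {d : ℕ} {z : Pt d} {s : Finset (Pt d)} {w wp wq β : Pt d → ℝ} {p q t t' : Pt d}

lemma GenPos.eq_of_isConvexWeights (hgen : GenPos d z ↑s) (hs : s.card ≤ d + 2)
    (hw : IsConvexWeights s z w) (ht : t ∈ s) (ht' : t' ∈ s) (hwt : w t = 0) (hwt' : w t' = 0) :
    t = t' := by
  classical
  by_contra hne
  let u := (s.erase t).erase t'
  have hu : u.card ≤ d := by
    have : t' ∈ s.erase t := Finset.mem_erase.mpr ⟨Ne.symm hne, ht'⟩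
    simp only [u, Finset.card_erase_of_mem this, Finset.card_erase_of_mem ht]
    omega
  have hus : u ⊆ s := (Finset.erase_subset _ _).trans (Finset.erase_subset _ _)
  have hz : z ∈ convexHull ℝ (u : Set (Pt d)) := by
    refine (mem_convexHull_iff_exists_isConvexWeights hus).mpr ⟨w, hw, fun y hy hyu => ?_⟩
    obtain rfl | rfl : y = t' ∨ y = t := by simpa [u, hy, or_iff_not_imp_left] using hyu
    exacts [hwt', hwt]
  exact (hgen.lt_card_of_mem_convexHull hus hz).not_ge hu

lemma GenPos.eq_zero_of_isAffineRelation (hgen : GenPos d z ↑s) (hs : s.card ≤ d + 2)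
    (hw : IsConvexWeights s z w) (hp : p ∈ s) (hwp : w p = 0) (hβ : IsAffineRelation s β)
    (hβp : β p = 0) : ∀ y ∈ s, β y = 0 := by
  -- otherwise, pushing `w` along `β` until a weight vanishes gives `w` a second zero
  by_contra! ⟨y, hy, hβy⟩
  obtain ⟨t, ht, hβt, hw', hw't⟩ := hw.exists_sub_smul hβ
    (Finset.exists_pos_of_sum_zero_of_exists_nonzero β hβ.sum_eq_zero ⟨y, hy, hβy⟩)
  have htp : t = p := hgen.eq_of_isConvexWeights hs hw' ht hp hw't (by simp [hwp, hβp])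
  exact hβt.ne' (htp ▸ hβp)

lemma GenPos.eq_or_eq_of_isConvexWeights (hgen : GenPos d z ↑s) (hs : s.card ≤ d + 2)
    (hwp : IsConvexWeights s z wp) (hp : p ∈ s) (hwpp : wp p = 0)
    (hwq : IsConvexWeights s z wq) (hq : q ∈ s) (hwqq : wq q = 0) (hpq : p ≠ q)
    (hw : IsConvexWeights s z w) (ht : t ∈ s) (hwt : w t = 0) : t = p ∨ t = q := by
  have hwqp : 0 < wq p := (hwq.nonneg p hp).lt_of_ne fun h =>
    hpq (hgen.eq_of_isConvexWeights hs hwq hp hq h.symm hwqq)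
  have hwpq : 0 < wp q := (hwp.nonneg q hq).lt_of_ne fun h =>
    hpq (hgen.eq_of_isConvexWeights hs hwp hp hq hwpp h.symm)
  set c := w p / wq p
  have hline : ∀ y ∈ s, w y = (1 - c) * wp y + c * wq y := by
    intro y hy
    have := hgen.eq_zero_of_isAffineRelation hs hwp hp hwpp
      ((hw.sub hwp).sub ((hwq.sub hwp).smul c)) (by simp [c, hwpp, hwqp.ne']) y hy
    simp only [Pi.sub_apply, Pi.smul_apply, smul_eq_mul] at this
    linarith
  have hc0 : 0 ≤ c := div_nonneg (hw.nonneg p hp) hwqp.le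
  have hc1 : c ≤ 1 := by
    have := hw.nonneg q hq
    rw [hline q hq, hwqq] at this
    nlinarith
  rw [hline t ht] at hwt
  rcases hc1.lt_or_eq with hc1 | hc1
  · left
    refine hgen.eq_of_isConvexWeights hs hwp ht hp ?_ hwpp
    nlinarith [hwp.nonneg t ht, hwq.nonneg t ht]
  · right
    refine hgen.eq_of_isConvexWeights hs hwq ht hq ?_ hwqq
    simpa [hc1] using hwt

lemma GenPos.exists_erase_mem_convexHull_iff (hgen : GenPos d z ↑s) (hs : s.card = d + 2)
    (hz : z ∈ convexHull ℝ (s : Set (Pt d))) :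
    ∃ p ∈ s, ∃ q ∈ s, p ≠ q ∧
      ∀ t ∈ s, z ∈ convexHull ℝ (↑(s.erase t) : Set (Pt d)) ↔ t = p ∨ t = q := by
  obtain ⟨w, hw0, hw1, hwz⟩ := Finset.mem_convexHull'.mp hz
  have hw : IsConvexWeights s z w := ⟨hw0, hw1, hwz⟩
  obtain ⟨α, hαz, hα1, y, hy, hαy⟩ :=
    Module.exists_nontrivial_relation_sum_zero_of_finrank_succ_lt_card (R := ℝ) (t := s)
      (by simp [hs])
  have hα : IsAffineRelation s α := ⟨hα1, hαz⟩
  obtain ⟨p, hp, hαp, hwp, hwpp⟩ := hw.exists_sub_smul hα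
    (Finset.exists_pos_of_sum_zero_of_exists_nonzero α hα1 ⟨y, hy, hαy⟩)
  obtain ⟨q, hq, hαq, hwq, hwqq⟩ := hw.exists_sub_smul hα.neg
    (Finset.exists_pos_of_sum_zero_of_exists_nonzero (-α) hα.neg.sum_eq_zero
      ⟨y, hy, neg_ne_zero.mpr hαy⟩)
  have hpq : p ≠ q := by
    rintro rfl
    exact (neg_pos.mp hαq).not_gt hαp
  refine ⟨p, hp, q, hq, hpq, fun t ht => ?_⟩
  rw [mem_convexHull_erase_iff_exists_isConvexWeights ht]
  constructor
  · rintro ⟨w', hw', hw't⟩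
    exact hgen.eq_or_eq_of_isConvexWeights hs.le hwp hp hwpp hwq hq hwqq hpq hw' ht hw't
  · rintro (rfl | rfl)
    exacts [⟨_, hwp, hwpp⟩, ⟨_, hwq, hwqq⟩]

lemma GenPos.exists_isZContaining_iff (hgen : GenPos d z ↑s) (hs : s.card = d + 2)
    (hz : IsZContaining d z ↑s) :
    ∃ p ∈ s, ∃ q ∈ s, p ≠ q ∧ ∀ X ⊆ (s : Set (Pt d)),
      IsZContaining d z X ↔ X = ↑s ∨ X = ↑s \ {p} ∨ X = ↑s \ {q} := by
  obtain ⟨p, hp, q, hq, hpq, herase⟩ :=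
    hgen.exists_erase_mem_convexHull_iff hs (interior_subset hz)
  refine ⟨p, hp, q, hq, hpq, fun X hX => ?_⟩
  obtain ⟨u, rfl⟩ := (s.finite_toSet.subset hX).exists_finset_coe
  have hus : u ⊆ s := Finset.coe_subset.mp hX
  rw [hgen.isZContaining_iff hX, ← Finset.coe_erase, ← Finset.coe_erase]
  simp only [Finset.coe_inj]
  constructor
  · intro hzu
    by_cases hu : u = s
    · exact Or.inl hu
    obtain ⟨t, hts, htu⟩ := Finset.exists_of_ssubset (hus.ssubset_of_ne hu)
    have hut : u = s.erase t := Finset.eq_of_subset_of_card_le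
      (fun y hy => Finset.mem_erase.mpr ⟨fun h => htu (h ▸ hy), hus hy⟩)
      (by have := hgen.lt_card_of_mem_convexHull hus hzu; rw [Finset.card_erase_of_mem hts]; omega)
    subst hut
    rcases (herase t hts).mp hzu with rfl | rfl
    exacts [Or.inr (Or.inl rfl), Or.inr (Or.inr rfl)]
  · rintro (rfl | rfl | rfl)
    exacts [interior_subset hz, (herase p hp).mpr (Or.inl rfl), (herase q hq).mpr (Or.inr rfl)]

end CircuitOfDPlusTwoPoints

section Antichain

variable {β : Type*} [PartialOrder β] {P : β → Prop} {F : Set β}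

lemma setOf_maximal_eq_of_isAntichain (hF : IsAntichain (· ≤ ·) F) (hFP : ∀ x ∈ F, P x)
    (hPF : ∀ x, P x → ∃ y ∈ F, x ≤ y) : {x | Maximal P x} = F := by
  ext x
  refine ⟨fun hx => ?_, fun hx => ⟨hFP x hx, fun y hy hxy => ?_⟩⟩
  · obtain ⟨y, hyF, hxy⟩ := hPF x hx.prop
    rwa [hx.eq_of_le (hFP y hyF) hxy]
  · obtain ⟨y', hy'F, hyy'⟩ := hPF y hy
    rwa [hF.eq hx hy'F (hxy.trans hyy')]

lemma setOf_minimal_eq_of_isAntichain (hF : IsAntichain (· ≤ ·) F) (hFP : ∀ x ∈ F, P x)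
    (hPF : ∀ x, P x → ∃ y ∈ F, y ≤ x) : {x | Minimal P x} = F := by
  ext x
  refine ⟨fun hx => ?_, fun hx => ⟨hFP x hx, fun y hy hyx => ?_⟩⟩
  · obtain ⟨y, hyF, hyx⟩ := hPF x hx.prop
    rwa [hx.eq_of_ge (hFP y hyF) hyx]
  · obtain ⟨y', hy'F, hy'y⟩ := hPF y hy
    rwa [← hF.eq hy'F hx (hy'y.trans hyx)]

end Antichain

section ThreeContainingSets

variable {α : Type*} {S T : Set α} {p q : α} {P : Set α → Prop}

lemma Set.sdiff_singleton_subset_sdiff_singleton_iff {t t' : α} (ht' : t' ∈ S) :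
    S \ {t} ⊆ S \ {t'} ↔ t = t' := by
  refine ⟨fun h => ?_, fun h => h ▸ subset_rfl⟩
  by_contra hne
  exact (h ⟨ht', Ne.symm hne⟩).2 rfl

lemma Set.injOn_sdiff_singleton : Set.InjOn (fun t => S \ {t}) S := fun _ _ _ ht' h =>
  (Set.sdiff_singleton_subset_sdiff_singleton_iff ht').mp h.le

lemma Set.isAntichain_image_sdiff_singleton (hT : T ⊆ S) :
    IsAntichain (· ≤ ·) ((fun t => S \ {t}) '' T) := by
  rintro _ ⟨t, -, rfl⟩ _ ⟨t', ht', rfl⟩ hne hsub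
  exact hne (by rw [(Set.sdiff_singleton_subset_sdiff_singleton_iff (hT ht')).mp hsub])

variable (hp : p ∈ S) (hq : q ∈ S) (hP : ∀ X ⊆ S, P X ↔ X = S ∨ X = S \ {p} ∨ X = S \ {q})
include hp hq hP

lemma setOf_minimal_eq_image_pair :
    {C | Minimal (fun C => C ⊆ S ∧ P C) C} = (fun t => S \ {t}) '' {p, q} := by
  refine setOf_minimal_eq_of_isAntichain
    (Set.isAntichain_image_sdiff_singleton (Set.pair_subset hp hq)) ?_ ?_
  · rintro _ ⟨t, ht, rfl⟩
    refine ⟨Set.sdiff_subset, (hP _ Set.sdiff_subset).mpr ?_⟩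
    rcases ht with rfl | rfl <;> simp
  · rintro X ⟨hXS, hX⟩
    rcases (hP X hXS).mp hX with h | h | h
    · exact ⟨S \ {p}, Set.mem_image_of_mem _ (by simp), h ▸ Set.sdiff_subset⟩
    · exact ⟨S \ {p}, Set.mem_image_of_mem _ (by simp), h.ge⟩
    · exact ⟨S \ {q}, Set.mem_image_of_mem _ (by simp), h.ge⟩

lemma setOf_maximal_eq_insert_image (hpq : p ≠ q) :
    {A | Maximal (fun A => A ⊆ S ∧ ¬ P A) A} =
      insert (S \ {p, q}) ((fun t => S \ {t}) '' (S \ {p, q})) := by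
  refine setOf_maximal_eq_of_isAntichain
    ((Set.isAntichain_image_sdiff_singleton Set.sdiff_subset).insert ?_ ?_) ?_ ?_
  · rintro _ ⟨t, ht, rfl⟩ - h
    have := @h p
    grind
  · rintro _ ⟨t, ht, rfl⟩ - h
    have := @h t
    grind
  · rintro A hA
    rcases hA with rfl | ⟨t, ht, rfl⟩ <;> refine ⟨Set.sdiff_subset, ?_⟩ <;>
      rw [hP _ Set.sdiff_subset] <;> rintro (h | h | h)
    · have := Set.ext_iff.mp h p; grind
    · have := Set.ext_iff.mp h q; grind
    · have := Set.ext_iff.mp h p; grind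
    · have := Set.ext_iff.mp h t; grind
    · have := Set.ext_iff.mp h p; grind
    · have := Set.ext_iff.mp h q; grind
  · rintro A ⟨hAS, hA⟩
    rw [hP A hAS] at hA
    by_cases h : ∃ t ∈ S \ {p, q}, t ∉ A
    · obtain ⟨t, ht, htA⟩ := h
      exact ⟨S \ {t}, Set.mem_insert_of_mem _ ⟨t, ht, rfl⟩, Set.subset_sdiff_singleton hAS htA⟩
    push Not at h
    by_cases hpA : p ∈ A <;> by_cases hqA : q ∈ A
    · exact absurd (Or.inl (by ext; grind)) hA
    · exact absurd (Or.inr (Or.inr (by ext; grind))) hA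
    · exact absurd (Or.inr (Or.inl (by ext; grind))) hA
    · exact ⟨S \ {p, q}, Set.mem_insert _ _, fun x hx => by grind⟩

lemma ncard_setOf_minimal_eq_two (hpq : p ≠ q) :
    {C | Minimal (fun C => C ⊆ S ∧ P C) C}.ncard = 2 := by
  rw [setOf_minimal_eq_image_pair hp hq hP,
    (Set.injOn_sdiff_singleton.mono (Set.pair_subset hp hq)).ncard_image,
    Set.ncard_pair hpq]

lemma ncard_setOf_maximal_add_one (hS : S.Finite) (hpq : p ≠ q) :
    {A | Maximal (fun A => A ⊆ S ∧ ¬ P A) A}.ncard + 1 = S.ncard := by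
  have hnotin : S \ {p, q} ∉ (fun t => S \ {t}) '' (S \ {p, q}) := by
    rintro ⟨t, ht, h⟩
    exact (h ▸ ht).2 rfl
  have hpqS : ({p, q} : Set α) ⊆ S := Set.pair_subset hp hq
  rw [setOf_maximal_eq_insert_image hp hq hP hpq, Set.ncard_insert_of_notMem hnotin
    (hS.sdiff.image _), (Set.injOn_sdiff_singleton.mono Set.sdiff_subset).ncard_image,
    ← Set.ncard_sdiff_add_ncard_of_subset hpqS hS, Set.ncard_pair hpq]

end ThreeContainingSets

lemma minContaining_eq_setOf_minimal {d : ℕ} (z : Pt d) (S : Set (Pt d)) :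
    MinContaining d z S = {C | Minimal (fun C => C ⊆ S ∧ IsZContaining d z C) C} := by
  ext C
  simp only [MinContaining, Set.mem_ofPred_eq, minimal_iff_forall_lt, not_and]
  exact and_assoc.symm.trans (and_congr_right fun h => forall₂_congr fun Y hY =>
    ⟨fun h' _ => h', fun h' => h' (hY.le.trans h.1)⟩)

lemma maxAvoiding_eq_setOf_maximal {d : ℕ} (z : Pt d) (S : Set (Pt d)) :
    MaxAvoiding d z S = {A | Maximal (fun A => A ⊆ S ∧ ¬ IsZContaining d z A) A} := by
  ext A
  simp only [MaxAvoiding, IsZAvoiding, IsZContaining, Set.mem_ofPred_eq, maximal_iff_forall_gt,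
    not_and, not_not]
  exact and_assoc.symm.trans (and_congr_right fun _ => forall_congr' fun _ => imp.swap)

theorem maxAvoiding_card_eq_of_card_eq_d_add_two_general
    (d : ℕ) (S : Set (Pt d)) (hS : S.Finite) (z : Pt d)
    (hgen : GenPos d z S) (hScont : IsZContaining d z S) (hcard : S.ncard = d + 2) :
    ((MaxAvoiding d z S).ncard : ℤ) = d * (MinContaining d z S).ncard - d + 1 := by
  obtain ⟨s, rfl⟩ := hS.exists_finset_coe
  obtain ⟨p, hp, q, hq, hpq, hP⟩ :=
    hgen.exists_isZContaining_iff (by rwa [Set.ncard_coe_finset] at hcard) hScont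
  have hmin : (MinContaining d z ↑s).ncard = 2 := by
    rw [minContaining_eq_setOf_minimal]
    exact ncard_setOf_minimal_eq_two hp hq hP hpq
  have hmax : (MaxAvoiding d z ↑s).ncard + 1 = d + 2 := by
    rw [maxAvoiding_eq_setOf_maximal, ← hcard]
    exact ncard_setOf_maximal_add_one hp hq hP hS hpq
  rw [hmin, show (MaxAvoiding d z ↑s).ncard = d + 1 by omega]
  push_cast
  ring

theorem maxAvoiding_card_eq_of_card_eq_d_add_two
    (d : ℕ) (S : Set (Pt d)) (hS : S.Finite) (z : Pt d) (hzS : z ∉ S)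
    (hgen : GenPos d z S) (hScont : IsZContaining d z S) (hcard : S.ncard = d + 2) :
    ((MaxAvoiding d z S).ncard : ℤ) = d * (MinContaining d z S).ncard - d + 1 :=
  maxAvoiding_card_eq_of_card_eq_d_add_two_general d S hS z hgen hScont hcard
end

section
/- Let S be a finite set of points in ℝ^d, let z lie in the interior of the convex hull conv(S), and suppose z is in general position with respect to S. Then there exists X ⊆ S such that X is affinely independent, |X| = d + 1 (so conv(X) is a d-dimensional simplex), and z lies in the interior of conv(X). -/
open Set

theorem AffineBasis.affineCombination_mem_interior_convexHull {ι E : Type*} [Fintype ι]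
    [NormedAddCommGroup E] [NormedSpace ℝ E] (b : AffineBasis ι ℝ E) {w : ι → ℝ}
    (hw : ∀ i, 0 < w i) (hw₁ : ∑ i, w i = 1) :
    Finset.univ.affineCombination ℝ b w ∈ interior (convexHull ℝ (range b)) := by
  rw [b.interior_convexHull]
  intro i
  rw [b.coord_apply_combination_of_mem (Finset.mem_univ i) hw₁]
  exact hw i

theorem GenPos.card_eq_of_mem_affineSpan {d : ℕ} {z : Pt d} {S : Set (Pt d)}
    (hgen : GenPos d z S) {ι : Type*} [Fintype ι] {p : ι → Pt d} (hp : AffineIndependent ℝ p)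
    (hpS : range p ⊆ S) (hz : z ∈ affineSpan ℝ (range p)) : Fintype.card ι = d + 1 := by
  have : Nonempty ι := range_nonempty_iff_nonempty.1 ((affineSpan_nonempty ℝ).1 ⟨z, hz⟩)
  have hge : d ≤ Module.finrank ℝ (vectorSpan ℝ (range p)) :=
    not_lt.1 fun hlt => hgen _ hpS hlt hz
  have hle : Module.finrank ℝ (vectorSpan ℝ (range p)) ≤ d :=
    (Submodule.finrank_le _).trans_eq finrank_euclideanSpace_fin
  rw [← hp.finrank_vectorSpan_add_one]
  omega

theorem exists_simplex_containing_z_general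
    (d : ℕ) (S : Set (Pt d)) (z : Pt d)
    (hz : z ∈ interior (convexHull ℝ S)) (hgen : GenPos d z S) :
    ∃ X ⊆ S, AffineIndependent ℝ ((↑) : X → Pt d) ∧ X.ncard = d + 1 ∧
      z ∈ interior (convexHull ℝ X) := by
  obtain ⟨ι, _, p, w, hpS, hp, hw, hw₁, hpz⟩ :=
    eq_pos_convex_span_of_mem_convexHull (interior_subset hz)
  rw [← Finset.univ.affineCombination_eq_linear_combination p w hw₁] at hpz
  subst hpz
  have hcard : Fintype.card ι = d + 1 :=
    hgen.card_eq_of_mem_affineSpan hp hpS (affineCombination_mem_affineSpan hw₁ p)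
  let b : AffineBasis ι ℝ (Pt d) :=
    ⟨p, hp, hp.affineSpan_eq_top_iff_card_eq_finrank_add_one.2
      (by rw [finrank_euclideanSpace_fin, hcard])⟩
  refine ⟨range p, hpS, hp.range, ?_, b.affineCombination_mem_interior_convexHull hw hw₁⟩
  rw [ncard_range_of_injective hp.injective, Nat.card_eq_fintype_card, hcard]

theorem exists_simplex_containing_z
    (d : ℕ) (S : Set (Pt d)) (hS : S.Finite) (z : Pt d)
    (hz : z ∈ interior (convexHull ℝ S)) (hgen : GenPos d z S) :
    ∃ X ⊆ S, AffineIndependent ℝ ((↑) : X → Pt d) ∧ X.ncard = d + 1 ∧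
      z ∈ interior (convexHull ℝ X) :=
  exists_simplex_containing_z_general d S z hz hgen
end

section
/- Let S be a finite set of points in ℝ^d and let z be in general position with respect to S. If C is a minimal z-containing subset of S, then C is affinely independent and |C| = d + 1, i.e. conv(C) is a d-dimensional simplex. -/
/-!
By Carathéodory, `z` lies in the convex hull of an affinely independent `t ⊆ C`. General position
forces `t` to span `ℝ^d`, so `t` is an affine basis with `d + 1` points, and it forces every
barycentric coordinate of `z` to be positive: a zero coordinate would put `z` in the affine span of
a facet of `t`, which does not span. Hence `z` is interior to `conv t`, and minimality gives `C = t`.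
-/

theorem AffineBasis.mem_affineSpan_image_compl_of_coord_eq_zero {ι k V P : Type*} [Fintype ι]
    [Ring k] [Nontrivial k] [AddCommGroup V] [Module k V] [AddTorsor V P]
    (b : AffineBasis ι k P) {i : ι} {p : P} (hp : b.coord i p = 0) :
    p ∈ affineSpan k (b '' {i}ᶜ) := by
  rw [← b.affineCombination_coord_eq_self p]
  refine affineCombination_mem_affineSpan_image (b.sum_coord_apply_eq_one p) (fun j _ hj => ?_) b
  rwa [Set.notMem_compl_iff.mp hj]

theorem AffineBasis.mem_interior_convexHull_of_notMem_affineSpan_image_compl {ι E : Type*}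
    [Fintype ι] [NormedAddCommGroup E] [NormedSpace ℝ E] (b : AffineBasis ι ℝ E) {p : E}
    (hp : p ∈ convexHull ℝ (Set.range b)) (hfacet : ∀ i, p ∉ affineSpan ℝ (b '' {i}ᶜ)) :
    p ∈ interior (convexHull ℝ (Set.range b)) := by
  rw [b.convexHull_eq_nonneg_coord] at hp
  rw [b.interior_convexHull]
  exact fun i => (hp i).lt_of_ne fun h =>
    hfacet i (b.mem_affineSpan_image_compl_of_coord_eq_zero h.symm)

namespace GenPos

variable {d : ℕ} {z : Pt d} {S : Set (Pt d)}

theorem affineSpan_eq_top (hgen : GenPos d z S) {X : Set (Pt d)} (hXS : X ⊆ S)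
    (hz : z ∈ affineSpan ℝ X) : affineSpan ℝ X = ⊤ := by
  by_contra hne
  have hX : X.Nonempty := (affineSpan_nonempty ℝ).mp ⟨z, hz⟩
  have hvec : vectorSpan ℝ X ≠ ⊤ :=
    mt (AffineSubspace.affineSpan_eq_top_iff_vectorSpan_eq_top_of_nonempty ℝ _ _ hX).mpr hne
  have hrank : Module.finrank ℝ (vectorSpan ℝ X) < d := by
    simpa [finrank_euclideanSpace] using Submodule.finrank_lt hvec
  exact hgen X hXS hrank hz

theorem mem_interior_convexHull_s10 {ι : Type*} [Fintype ι] (hgen : GenPos d z S)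
    (b : AffineBasis ι ℝ (Pt d)) (hbS : Set.range b ⊆ S) (hz : z ∈ convexHull ℝ (Set.range b)) :
    z ∈ interior (convexHull ℝ (Set.range b)) := by
  refine b.mem_interior_convexHull_of_notMem_affineSpan_image_compl hz fun i hfacet => ?_
  have htop := hgen.affineSpan_eq_top ((Set.image_subset_range _ _).trans hbS) hfacet
  have hbi : b i ∉ affineSpan ℝ (b '' {i}ᶜ) :=
    (b.ind.mem_affineSpan_iff i {i}ᶜ).not.mpr (Set.notMem_compl_iff.mpr rfl)
  exact hbi (htop ▸ AffineSubspace.mem_top ℝ _ (b i))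

end GenPos

theorem minContaining_is_simplex_general
    (d : ℕ) (S : Set (Pt d)) (z : Pt d) (hgen : GenPos d z S)
    (C : Set (Pt d)) (hC : C ∈ MinContaining d z S) :
    AffineIndependent ℝ ((↑) : C → Pt d) ∧ C.ncard = d + 1 := by
  obtain ⟨hCS, hzC, hmin⟩ := hC
  obtain ⟨t, htC, ht, hzt⟩ : ∃ t : Finset (Pt d), ↑t ⊆ C ∧
      AffineIndependent ℝ ((↑) : t → Pt d) ∧ z ∈ convexHull ℝ ↑t := by
    have hz := interior_subset hzC
    rw [convexHull_eq_union] at hz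
    simpa only [Set.mem_iUnion, exists_prop] using hz
  have htS : ↑t ⊆ S := htC.trans hCS
  have hspan : affineSpan ℝ (Set.range ((↑) : t → Pt d)) = ⊤ := by
    rw [Subtype.range_coe]
    exact hgen.affineSpan_eq_top htS (convexHull_subset_affineSpan _ hzt)
  let b : AffineBasis t ℝ (Pt d) := ⟨(↑), ht, hspan⟩
  have hb : Set.range b = ↑t := Subtype.range_coe
  have htC_eq : ↑t = C := by
    by_contra hne
    refine hmin _ (htC.ssubset_of_ne hne) ?_
    rw [IsZContaining, ← hb]
    exact hgen.mem_interior_convexHull_s10 b (by rwa [hb]) (by rwa [hb])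
  subst htC_eq
  refine ⟨ht, ?_⟩
  rw [Set.ncard_coe_finset]
  simpa [finrank_euclideanSpace] using ht.affineSpan_eq_top_iff_card_eq_finrank_add_one.mp hspan

theorem minContaining_is_simplex
    (d : ℕ) (S : Set (Pt d)) (hS : S.Finite) (z : Pt d) (hgen : GenPos d z S)
    (C : Set (Pt d)) (hC : C ∈ MinContaining d z S) :
    AffineIndependent ℝ ((↑) : C → Pt d) ∧ C.ncard = d + 1 :=
  minContaining_is_simplex_general d S z hgen C hC
end

section
/- Let S be a finite set of points in ℝ^d and z ∈ ℝ^d \ S. Suppose S is a z-containing set and z is in general position with respect to S. Let A be a maximal z-avoiding subset of S and let s ∈ S \ A. Then A has a subset T such that: |T| = d; T ∪ {s} is affinely independent and z lies in the interior of conv(T ∪ {s}) (so conv(T ∪ {s}) is a d-dimensional simplex containing z as an interior point); and there exist a nonzero linear functional f on ℝ^d and a real number c with f(t) = c for every t ∈ T, f(a) ≤ c for every a ∈ A, and f(z) > c (so the hyperplane spanned by T is a facet hyperplane of conv(A) separating A from z). -/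
/-!
By maximality `z` is interior to `conv (A ∪ {s})`, and by general position `z ∉ conv A`.
Let `w` be the first point of `conv A` on the ray from `z` away from `s`: `z` lies strictly
between `s` and `w`, and no point of `(w, z]` lies in `conv A`. Carathéodory writes `w` as a
positive combination of affinely independent points `T ⊆ A`. General position forces `T ∪ {s}`
to be a `d`-simplex: it has at least `d + 1` vertices since `z` lies in its affine span, and `T`
alone cannot span `ℝ^d` since `w` would then be interior to `conv A`. The barycentric
coordinate of `s` in this simplex vanishes on `T` and is positive at `z`. It is nonpositive on
`A`: a point `a ∈ A` where it is positive could replace `s`, and the simplex on `T ∪ {a}`, which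
lies in `conv A`, contains the points of `(w, z]` near `w`.
-/

open Set AffineMap Filter Topology

section Affine

variable {ι k V : Type*} [Ring k] [AddCommGroup V] [Module k V]

theorem sum_smul_mem_affineSpan [Fintype ι] [Nontrivial k] {μ : ι → k} (hμ : ∑ i, μ i = 1)
    (p : ι → V) : ∑ i, μ i • p i ∈ affineSpan k (range p) := by
  rw [← Finset.univ.affineCombination_eq_linear_combination _ _ hμ]
  exact affineCombination_mem_affineSpan hμ p

theorem AffineBasis.coord_sum_smul [Fintype ι] (b : AffineBasis ι k V) {μ : ι → k}
    (hμ : ∑ i, μ i = 1) (i : ι) : b.coord i (∑ j, μ j • b j) = μ i := by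
  rw [← Finset.univ.affineCombination_eq_linear_combination _ _ hμ]
  exact b.coord_apply_combination_of_mem (Finset.mem_univ i) hμ

namespace AffineBasis

variable (B : AffineBasis (Option ι) k V) {x : V} {p : ι → V} (hB : ⇑B = fun o => o.elim x p)
include hB

theorem coord_none_of_optionElim (i : ι) : B.coord none (p i) = 0 := by
  simpa [hB] using B.coord_apply_ne (Option.some_ne_none i).symm

variable [Fintype ι] {μ : ι → k} (hμ : ∑ i, μ i = 1)
include hμ

theorem coord_sum_smul_of_optionElim (o : Option ι) :
    B.coord o (∑ i, μ i • p i) = o.elim 0 μ := by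
  have hμ' : ∑ o : Option ι, o.elim 0 μ = 1 := by simpa [Fintype.sum_option] using hμ
  convert B.coord_sum_smul hμ' o using 2
  simp [Fintype.sum_option, hB]

theorem coord_lineMap_sum_smul_of_optionElim (α : k) (o : Option ι) :
    B.coord o (lineMap x (∑ i, μ i • p i) α) = o.elim (1 - α) fun i => α * μ i := by
  have hx : B.coord o x = o.elim 1 0 := by
    rcases o with _ | i
    · simpa [hB] using B.coord_apply_eq none
    · simpa [hB] using B.coord_apply_ne (Option.some_ne_none i)
  rw [apply_lineMap, hx, B.coord_sum_smul_of_optionElim hB hμ, lineMap_apply_ring']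
  rcases o with _ | i
  · simp only [Option.elim_none]
    noncomm_ring
  · simp

end AffineBasis

end Affine

theorem AffineIndependent.optionElim {ι k V : Type*} [DivisionRing k] [AddCommGroup V]
    [Module k V] {p : ι → V}
    (hp : AffineIndependent k p) {x : V} (hx : x ∉ affineSpan k (range p)) :
    AffineIndependent k (fun o : Option ι => o.elim x p) := by
  refine AffineIndependent.affineIndependent_of_notMem_span
    (k := k) (p := fun o : Option ι => o.elim x p) (i := none) ?_ ?_
  · let e : {o : Option ι // o ≠ none} ↪ ι :=
      ⟨fun o => Option.get o.1 (Option.ne_none_iff_isSome.mp o.2), fun o o' h => by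
        ext1; simpa using congrArg some h⟩
    convert hp.comp_embedding e with o
    obtain ⟨_ | i, ho⟩ := o
    · exact absurd rfl ho
    · rfl
  · have himage : (fun o : Option ι => o.elim x p) '' {o | o ≠ none} = range p := by
      rw [← Option.image_elim_range_some_eq_range p x]
      congr
      ext o
      simp [Option.ne_none_iff_exists, eq_comm]
    simpa [himage] using hx

section RealVectorSpace

variable {V : Type*} [AddCommGroup V] [Module ℝ V]

theorem AffineMap.exists_separating_linearMap (g : V →ᵃ[ℝ] ℝ) {T A : Set V}
    {z : V} (hTne : T.Nonempty) (hT : ∀ t ∈ T, g t = 0) (hA : ∀ a ∈ A, g a ≤ 0)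
    (hz : 0 < g z) :
    ∃ f : V →ₗ[ℝ] ℝ, f ≠ 0 ∧ ∃ c : ℝ,
      (∀ t ∈ T, f t = c) ∧ (∀ a ∈ A, f a ≤ c) ∧ c < f z := by
  have hg : ∀ v, g.linear v = g v - g 0 := fun v => congrFun g.decomp' v
  obtain ⟨t₀, ht₀⟩ := hTne
  refine ⟨g.linear, fun h => ?_, -g 0, fun t ht => ?_, fun a ha => ?_, ?_⟩
  · have hz0 := LinearMap.congr_fun h z
    have ht0 := LinearMap.congr_fun h t₀
    rw [hg, LinearMap.zero_apply] at hz0 ht0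
    linarith [hT t₀ ht₀]
  · rw [hg, hT t ht, zero_sub]
  · linarith [hg a, hA a ha]
  · linarith [hg z]

theorem exists_wbtw_of_mem_convexHull_insert {A : Set V} {s z : V}
    (hz : z ∈ convexHull ℝ (insert s A)) (hzs : z ≠ s) :
    ∃ y ∈ convexHull ℝ A, Wbtw ℝ s z y := by
  rcases A.eq_empty_or_nonempty with rfl | hA
  · simp [hzs] at hz
  rw [convexHull_insert hA, mem_convexJoin] at hz
  obtain ⟨_, rfl, y, hy, hzy⟩ := hz
  exact ⟨y, hy, mem_segment_iff_wbtw.mp hzy⟩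

end RealVectorSpace

section Normed

variable {E : Type*} [NormedAddCommGroup E] [NormedSpace ℝ E] {ι : Type*}

theorem AffineBasis.sum_smul_mem_interior_convexHull [Fintype ι] (b : AffineBasis ι ℝ E)
    {μ : ι → ℝ} (hμ : ∀ i, 0 < μ i) (hμ1 : ∑ i, μ i = 1) :
    ∑ i, μ i • b i ∈ interior (convexHull ℝ (range b)) := by
  rw [b.interior_convexHull]
  exact fun i => (hμ i).trans_eq (b.coord_sum_smul hμ1 i).symm

theorem AffineBasis.exists_lineMap_mem_interior_convexHull [Finite ι] (b : AffineBasis ι ℝ E)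
    {w z : E} (h : ∀ i, 0 < b.coord i w ∨ b.coord i w = 0 ∧ 0 < b.coord i z) :
    ∃ β ∈ Ioc (0 : ℝ) 1, lineMap w z β ∈ interior (convexHull ℝ (range b)) := by
  have hcoord : ∀ i, ∀ᶠ β in 𝓝[>] (0 : ℝ), 0 < b.coord i (lineMap w z β) := by
    intro i
    simp only [apply_lineMap]
    rcases h i with hw | ⟨hw, hz⟩
    · exact ((lineMap_continuous.tendsto' 0 _ (lineMap_apply_zero _ _)).mono_left
        nhdsWithin_le_nhds).eventually_const_lt hw
    · filter_upwards [self_mem_nhdsWithin] with β hβ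
      rw [hw, lineMap_apply_ring', sub_zero, add_zero]
      exact mul_pos hβ hz
  have hIoc : ∀ᶠ β in 𝓝[>] (0 : ℝ), β ∈ Ioc 0 1 := Ioc_mem_nhdsGT one_pos
  obtain ⟨β, hβ, hmem⟩ := (hIoc.and (eventually_all.mpr hcoord)).exists
  exact ⟨β, hβ, by rw [b.interior_convexHull]; exact hmem⟩

theorem exists_sbtw_forall_lineMap_notMem {K : Set E} (hK : IsCompact K) {s z y : E}
    (hy : y ∈ K) (hszy : Wbtw ℝ s z y) (hzs : z ≠ s) (hzK : z ∉ K) :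
    ∃ w ∈ K, Sbtw ℝ s z w ∧ ∀ β ∈ Ioc (0 : ℝ) 1, lineMap w z β ∉ K := by
  have hseg : IsCompact (segment ℝ z y) := by
    rw [segment_eq_image_lineMap]
    exact isCompact_Icc.image lineMap_continuous
  obtain ⟨w, ⟨hwseg, hwK⟩, hmin⟩ := (hseg.inter_right hK.isClosed).exists_isMinOn
    ⟨y, right_mem_segment ℝ z y, hy⟩
    (continuous_id.dist (continuous_const (y := z))).continuousOn
  have hzw : z ≠ w := fun h => hzK (h ▸ hwK)
  have hzwy : Wbtw ℝ z w y := mem_segment_iff_wbtw.mp hwseg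
  refine ⟨w, hwK, ⟨hszy.trans_right_left hzwy, hzs, hzw⟩, fun β hβ hmem => ?_⟩
  have hwβz : Wbtw ℝ w (lineMap w z β) z := ⟨β, ⟨hβ.1.le, hβ.2⟩, rfl⟩
  have hcloser : dist w z ≤ dist (lineMap w z β) z :=
    hmin ⟨mem_segment_iff_wbtw.mpr (hzwy.trans_left hwβz.symm), hmem⟩
  have hdist : dist (lineMap w z β) z = (1 - β) * dist w z := by
    rw [dist_lineMap_right, Real.norm_of_nonneg (sub_nonneg.mpr hβ.2)]
  have hwz : 0 < dist w z := dist_pos.mpr hzw.symm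
  nlinarith [hβ.1]

theorem AffineBasis.coord_none_nonpos_of_forall_lineMap_notMem [Fintype ι]
    (B : AffineBasis (Option ι) ℝ E) {x : E} {p : ι → E} (hB : ⇑B = fun o => o.elim x p)
    {μ : ι → ℝ} (hμ : ∀ i, 0 < μ i) (hμ1 : ∑ i, μ i = 1) {z : E}
    (hz : 0 < B.coord none z) {A : Set E} (hpA : range p ⊆ A)
    (hfirst : ∀ β ∈ Ioc (0 : ℝ) 1, lineMap (∑ i, μ i • p i) z β ∉ convexHull ℝ A)
    {a : E} (ha : a ∈ A) : B.coord none a ≤ 0 := by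
  set g := B.coord none
  have hgp : ∀ i, g (p i) = 0 := B.coord_none_of_optionElim hB
  by_contra! ha0
  have hp : AffineIndependent ℝ p := by
    simpa [hB, Function.comp_def] using B.ind.comp_embedding ⟨some, Option.some_injective ι⟩
  have ha_span : a ∉ affineSpan ℝ (range p) := fun h => ha0.ne' <|
    AffineMap.eqOn_affineSpan (f := g) (g := AffineMap.const ℝ E 0)
      (by rintro _ ⟨i, rfl⟩; exact hgp i) h
  have := B.finiteDimensional
  have hq := hp.optionElim ha_span
  let B' : AffineBasis (Option ι) ℝ E :=
    ⟨_, hq, hq.affineSpan_eq_top_iff_card_eq_finrank_add_one.mpr B.card_eq_finrank_add_one⟩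
  have hB' : ⇑B' = fun o => o.elim a p := rfl
  have hB'g : B'.coord none = (g a)⁻¹ • g := by
    refine AffineMap.ext_on B'.tot ?_
    rintro _ ⟨_ | i, rfl⟩
    · simpa [hB', ha0.ne'] using B'.coord_apply_eq none
    · simpa [hB', hgp] using B'.coord_apply_ne (Option.some_ne_none i).symm
  obtain ⟨β, hβ, hmem⟩ :=
    B'.exists_lineMap_mem_interior_convexHull (w := ∑ i, μ i • p i) (z := z) fun o => by
      rw [B'.coord_sum_smul_of_optionElim hB' hμ1]
      rcases o with _ | i
      · rw [hB'g]
        exact Or.inr ⟨rfl, by simpa using mul_pos (inv_pos.mpr ha0) hz⟩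
      · exact Or.inl (hμ i)
  refine hfirst β hβ (convexHull_mono ?_ (interior_subset hmem))
  rintro _ ⟨_ | i, rfl⟩
  exacts [ha, hpA (mem_range_self i)]

end Normed

namespace GenPos

variable {d : ℕ} {z : Pt d} {S : Set (Pt d)}

theorem card_eq_of_mem_affineSpan_s12 (hgen : GenPos d z S) {ι : Type*} [Fintype ι]
    {p : ι → Pt d} (hp : AffineIndependent ℝ p) (hpS : range p ⊆ S)
    (hz : z ∈ affineSpan ℝ (range p)) : Fintype.card ι = d + 1 := by
  have : Nonempty ι := range_nonempty_iff_nonempty.mp ((affineSpan_nonempty ℝ).mp ⟨z, hz⟩)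
  have hge : d ≤ Module.finrank ℝ (vectorSpan ℝ (range p)) :=
    not_lt.mp fun h => hgen _ hpS h hz
  have hle : Module.finrank ℝ (vectorSpan ℝ (range p)) ≤ d :=
    (Submodule.finrank_le _).trans_eq (finrank_euclideanSpace_fin)
  rw [← hp.finrank_vectorSpan_add_one]
  omega

theorem notMem_convexHull (hgen : GenPos d z S) {A : Set (Pt d)} (hAS : A ⊆ S)
    (hA : IsZAvoiding d z A) : z ∉ convexHull ℝ A := by
  intro hzA
  obtain ⟨ι, _, p, μ, hpA, hp, hμ, hμ1, rfl⟩ := eq_pos_convex_span_of_mem_convexHull hzA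
  have hcard := hgen.card_eq_of_mem_affineSpan_s12 hp (hpA.trans hAS) (sum_smul_mem_affineSpan hμ1 p)
  let b : AffineBasis ι ℝ (Pt d) :=
    ⟨p, hp, hp.affineSpan_eq_top_iff_card_eq_finrank_add_one.mpr (by simpa using hcard)⟩
  exact hA (interior_mono (convexHull_mono hpA) (b.sum_smul_mem_interior_convexHull hμ hμ1))

theorem exists_affineBasis_optionElim (hgen : GenPos d z S) {A : Set (Pt d)} (hAS : A ⊆ S)
    {s : Pt d} (hsS : s ∈ S) {ι : Type*} [Fintype ι] {p : ι → Pt d}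
    (hp : AffineIndependent ℝ p) (hpA : range p ⊆ A) {μ : ι → ℝ} (hμ : ∀ i, 0 < μ i)
    (hμ1 : ∑ i, μ i = 1)
    (hszw : Wbtw ℝ s z (∑ i, μ i • p i))
    (hfirst : ∀ β ∈ Ioc (0 : ℝ) 1, lineMap (∑ i, μ i • p i) z β ∉ convexHull ℝ A) :
    ∃ B : AffineBasis (Option ι) ℝ (Pt d), ⇑B = fun o => o.elim s p := by
  have hw := sum_smul_mem_affineSpan hμ1 p
  have hcard : Fintype.card ι ≠ d + 1 := by
    intro hcard
    let b : AffineBasis ι ℝ (Pt d) :=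
      ⟨p, hp, hp.affineSpan_eq_top_iff_card_eq_finrank_add_one.mpr (by simpa using hcard)⟩
    obtain ⟨β, hβ, hmem⟩ :=
      b.exists_lineMap_mem_interior_convexHull (w := ∑ i, μ i • p i) (z := z)
        fun i => Or.inl ((hμ i).trans_eq (b.coord_sum_smul hμ1 i).symm)
    exact hfirst β hβ (convexHull_mono hpA (interior_subset hmem))
  obtain ⟨α, -, rfl⟩ := hszw
  have hs : s ∉ affineSpan ℝ (range p) := fun hs =>
    hcard (hgen.card_eq_of_mem_affineSpan_s12 hp (hpA.trans hAS) (lineMap_mem α hs hw))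
  have hq := hp.optionElim hs
  have hqS : range (fun o : Option ι => o.elim s p) ⊆ S := by
    rw [Option.range_elim]
    exact insert_subset hsS (hpA.trans hAS)
  have hzq : lineMap s (∑ i, μ i • p i) α ∈
      affineSpan ℝ (range fun o : Option ι => o.elim s p) := by
    rw [Option.range_elim]
    exact lineMap_mem α (mem_affineSpan ℝ (mem_insert s _))
      (affineSpan_mono ℝ (subset_insert s _) hw)
  refine ⟨⟨_, hq, hq.affineSpan_eq_top_iff_card_eq_finrank_add_one.mpr ?_⟩, rfl⟩
  rw [finrank_euclideanSpace_fin]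
  exact hgen.card_eq_of_mem_affineSpan_s12 hq hqS hzq

end GenPos

theorem exists_facet_hyperplane_of_maxAvoiding_general
    (d : ℕ) (S : Set (Pt d)) (hS : S.Finite) (z : Pt d) (hzS : z ∉ S)
    (hgen : GenPos d z S)
    (A : Set (Pt d)) (hA : A ∈ MaxAvoiding d z S) (s : Pt d) (hs : s ∈ S \ A) :
    ∃ T ⊆ A, T.ncard = d ∧
      AffineIndependent ℝ ((↑) : (T ∪ {s} : Set (Pt d)) → Pt d) ∧
      z ∈ interior (convexHull ℝ (T ∪ {s})) ∧
      ∃ f : Pt d →ₗ[ℝ] ℝ, f ≠ 0 ∧ ∃ c : ℝ,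
        (∀ t ∈ T, f t = c) ∧ (∀ a ∈ A, f a ≤ c) ∧ c < f z := by
  obtain ⟨hAS, hAavoid, hAmax⟩ := hA
  obtain ⟨hsS, hsA⟩ := hs
  have hzs : z ≠ s := fun h => hzS (h ▸ hsS)
  have hz_int : z ∈ interior (convexHull ℝ (insert s A)) := by
    simpa [IsZAvoiding] using hAmax _ (insert_subset hsS hAS) (ssubset_insert hsA)
  obtain ⟨y, hyA, hszy⟩ := exists_wbtw_of_mem_convexHull_insert (interior_subset hz_int) hzs
  obtain ⟨w, hwA, hszw, hfirst⟩ := exists_sbtw_forall_lineMap_notMem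
    ((hS.subset hAS).isCompact_convexHull (𝕜 := ℝ)) hyA hszy hzs
    (hgen.notMem_convexHull hAS hAavoid)
  obtain ⟨ι, _, p, μ, hpA, hp, hμ, hμ1, rfl⟩ := eq_pos_convex_span_of_mem_convexHull hwA
  obtain ⟨B, hB⟩ := hgen.exists_affineBasis_optionElim hAS hsS hp hpA hμ hμ1 hszw.wbtw hfirst
  have hrange : range B = range p ∪ {s} := by rw [hB, Option.range_elim, union_singleton]
  obtain ⟨α, ⟨hα0, hα1⟩, rfl⟩ := hszw.mem_image_Ioo
  have hcoord := B.coord_lineMap_sum_smul_of_optionElim hB hμ1 α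
  have hsz : 0 < B.coord none (lineMap s (∑ i, μ i • p i) α) := by simpa [hcoord] using hα1
  refine ⟨range p, hpA, ?_, hrange ▸ B.ind.range, hrange ▸ ?_,
    (B.coord none).exists_separating_linearMap
      ((affineSpan_nonempty ℝ).mp ⟨_, sum_smul_mem_affineSpan hμ1 p⟩)
      (by rintro _ ⟨i, rfl⟩; exact B.coord_none_of_optionElim hB i)
      (fun _ => B.coord_none_nonpos_of_forall_lineMap_notMem hB hμ hμ1 hsz hpA hfirst) hsz⟩
  · rw [ncard_range_of_injective hp.injective, Nat.card_eq_fintype_card]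
    simpa [finrank_euclideanSpace_fin] using B.card_eq_finrank_add_one
  · rw [B.interior_convexHull]
    rintro (_ | i)
    · exact hsz
    · simpa [hcoord] using mul_pos hα0 (hμ i)

theorem exists_facet_hyperplane_of_maxAvoiding
    (d : ℕ) (S : Set (Pt d)) (hS : S.Finite) (z : Pt d) (hzS : z ∉ S)
    (hScont : IsZContaining d z S) (hgen : GenPos d z S)
    (A : Set (Pt d)) (hA : A ∈ MaxAvoiding d z S) (s : Pt d) (hs : s ∈ S \ A) :
    ∃ T ⊆ A, T.ncard = d ∧
      AffineIndependent ℝ ((↑) : (T ∪ {s} : Set (Pt d)) → Pt d) ∧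
      z ∈ interior (convexHull ℝ (T ∪ {s})) ∧
      ∃ f : Pt d →ₗ[ℝ] ℝ, f ≠ 0 ∧ ∃ c : ℝ,
        (∀ t ∈ T, f t = c) ∧ (∀ a ∈ A, f a ≤ c) ∧ c < f z :=
  exists_facet_hyperplane_of_maxAvoiding_general d S hS z hzS hgen A hA s hs
end

section
/- Let S be a finite set of points in ℝ^d, z ∈ ℝ^d \ S, and s ∈ S. Then |A(S)| = |A(S \ {s})| + |A_s(S)|, where A_s(S) = {X ∈ A(S) : s ∈ X and X \ {s} is not a maximal z-avoiding subset of S \ {s}}. -/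
/-- `𝒜_s(S)`: members `X` of `𝒜(S)` with `s ∈ X` such that `X \ {s}` is not a maximal
`z`-avoiding subset of `S \ {s}`. -/
def MaxAvoidingNew (d : ℕ) (z : Pt d) (S : Set (Pt d)) (s : Pt d) : Set (Set (Pt d)) :=
  {X ∈ MaxAvoiding d z S | s ∈ X ∧ X \ {s} ∉ MaxAvoiding d z (S \ {s})}

/-!
`z`-avoidance is inherited by subsets, and that is all the argument uses. For such a property
`P`, the map `X ↦ X \ {s}` sends the maximal `P`-subsets of `S` outside `𝒜_s(S)` bijectively onto
the maximal `P`-subsets of `S \ {s}`. It is injective even on all maximal subsets: two sets with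
the same trace off `s` are comparable, and maximal subsets form an antichain. It is onto because a
maximal `A ⊆ S \ {s}` is either already maximal in `S`, or `A ∪ {s}` is a `P`-subset of `S`, and
then `A = X \ {s}` for any maximal `X ⊇ A ∪ {s}`, which exists since `S` is finite.
-/

section MaximalSubsets

variable {α : Type*} {P : Set α → Prop} {S A X : Set α} {s : α}

def maximalSubsets (P : Set α → Prop) (S : Set α) : Set (Set α) :=
  {A | Maximal (fun B => B ⊆ S ∧ P B) A}

def newMaximalSubsets (P : Set α → Prop) (S : Set α) (s : α) : Set (Set α) :=
  {X ∈ maximalSubsets P S | s ∈ X ∧ X \ {s} ∉ maximalSubsets P (S \ {s})}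

lemma mem_maximalSubsets : A ∈ maximalSubsets P S ↔ Maximal (fun B => B ⊆ S ∧ P B) A :=
  Iff.rfl

lemma maximalSubsets_finite (hS : S.Finite) : (maximalSubsets P S).Finite :=
  hS.finite_subsets.subset fun _ hA => hA.1.1

lemma exists_mem_maximalSubsets_superset (hS : S.Finite) (hAS : A ⊆ S) (hA : P A) :
    ∃ X ∈ maximalSubsets P S, A ⊆ X := by
  have hfin : {B | B ⊆ S ∧ P B}.Finite := hS.finite_subsets.subset fun _ hB => hB.1
  obtain ⟨X, hAX, hX⟩ := hfin.exists_le_maximal ⟨hAS, hA⟩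
  exact ⟨X, hX, hAX⟩

lemma injOn_sdiff_singleton_maximalSubsets : Set.InjOn (· \ {s}) (maximalSubsets P S) := by
  intro X hX Y hY hXY
  rw [mem_maximalSubsets] at hX hY
  have hcomparable : X ⊆ Y ∨ Y ⊆ X := by
    by_cases hsY : s ∈ Y
    · left
      calc X ⊆ insert s (X \ {s}) := Set.subset_insert_sdiff_singleton _ _
        _ = Y := by
          rw [show X \ {s} = Y \ {s} from hXY, Set.insert_sdiff_singleton, Set.insert_eq_of_mem hsY]
    · right
      calc Y = Y \ {s} := (Set.sdiff_singleton_eq_self hsY).symm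
        _ = X \ {s} := hXY.symm
        _ ⊆ X := Set.sdiff_subset
  rcases hcomparable with h | h
  exacts [Maximal.eq_of_subset hX hY.1 h, (Maximal.eq_of_subset hY hX.1 h).symm]

lemma sdiff_singleton_mem_maximalSubsets_sdiff (hX : X ∈ maximalSubsets P S)
    (hXN : X ∉ newMaximalSubsets P S s) : X \ {s} ∈ maximalSubsets P (S \ {s}) := by
  by_cases hsX : s ∈ X
  · by_contra h
    exact hXN ⟨hX, hsX, h⟩
  · rw [Set.sdiff_singleton_eq_self hsX, mem_maximalSubsets]
    exact (mem_maximalSubsets.1 hX).mono (fun B hB => ⟨hB.1.trans Set.sdiff_subset, hB.2⟩)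
      ⟨Set.subset_sdiff_singleton hX.1.1 hsX, hX.1.2⟩

lemma exists_sdiff_singleton_eq_of_mem_maximalSubsets_sdiff (hS : S.Finite) (hP : Antitone P)
    (hA : A ∈ maximalSubsets P (S \ {s})) :
    ∃ X ∈ maximalSubsets P S \ newMaximalSubsets P S s, X \ {s} = A := by
  have hsA : s ∉ A := fun h => (hA.1.1 h).2 rfl
  by_cases hins : insert s A ⊆ S ∧ P (insert s A)
  · obtain ⟨X, hX, hsAX⟩ := exists_mem_maximalSubsets_superset hS hins.1 hins.2
    have hXA : X \ {s} = A := (Maximal.eq_of_subset (mem_maximalSubsets.1 hA)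
      ⟨Set.sdiff_subset_sdiff_left hX.1.1, hP Set.sdiff_subset hX.1.2⟩
      (Set.subset_sdiff_singleton ((Set.subset_insert _ _).trans hsAX) hsA)).symm
    exact ⟨X, ⟨hX, fun hN => hN.2.2 (hXA ▸ hA)⟩, hXA⟩
  · have hAmax : A ∈ maximalSubsets P S := by
      refine ⟨⟨hA.1.1.trans Set.sdiff_subset, hA.1.2⟩, fun B hB hAB => ?_⟩
      by_cases hsB : s ∈ B
      · have hsAB : insert s A ⊆ B := Set.insert_subset hsB hAB
        exact absurd ⟨hsAB.trans hB.1, hP hsAB hB.2⟩ hins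
      · exact hA.2 ⟨Set.subset_sdiff_singleton hB.1 hsB, hB.2⟩ hAB
    exact ⟨A, ⟨hAmax, fun hN => hsA hN.2.1⟩, Set.sdiff_singleton_eq_self hsA⟩

theorem ncard_maximalSubsets_eq (hS : S.Finite) (hP : Antitone P) (s : α) :
    (maximalSubsets P S).ncard =
      (maximalSubsets P (S \ {s})).ncard + (newMaximalSubsets P S s).ncard := by
  have himage : (· \ {s}) '' (maximalSubsets P S \ newMaximalSubsets P S s) =
      maximalSubsets P (S \ {s}) := by
    refine Set.Subset.antisymm ?_ fun A hA =>
      exists_sdiff_singleton_eq_of_mem_maximalSubsets_sdiff hS hP hA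
    rintro _ ⟨X, ⟨hX, hXN⟩, rfl⟩
    exact sdiff_singleton_mem_maximalSubsets_sdiff hX hXN
  rw [← himage, (injOn_sdiff_singleton_maximalSubsets.mono Set.sdiff_subset).ncard_image,
    Set.ncard_sdiff_add_ncard_of_subset (fun _ hX => hX.1) (maximalSubsets_finite hS)]

end MaximalSubsets

lemma isZAvoiding_antitone (d : ℕ) (z : Pt d) : Antitone (IsZAvoiding d z) :=
  fun _ _ hXY hY hX => hY (interior_mono (convexHull_mono hXY) hX)

lemma maxAvoiding_eq_maximalSubsets (d : ℕ) (z : Pt d) (S : Set (Pt d)) :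
    MaxAvoiding d z S = maximalSubsets (IsZAvoiding d z) S := by
  ext A
  simp only [MaxAvoiding, maximalSubsets, Set.mem_ofPred_eq, Set.maximal_iff_forall_ssuperset]
  grind

lemma maxAvoidingNew_eq_newMaximalSubsets (d : ℕ) (z : Pt d) (S : Set (Pt d)) (s : Pt d) :
    MaxAvoidingNew d z S s = newMaximalSubsets (IsZAvoiding d z) S s := by
  simp only [MaxAvoidingNew, newMaximalSubsets, maxAvoiding_eq_maximalSubsets]

theorem maxAvoiding_card_eq_card_erase_add_card_new_general
    (d : ℕ) (S : Set (Pt d)) (hS : S.Finite) (z : Pt d) (s : Pt d) :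
    (MaxAvoiding d z S).ncard =
      (MaxAvoiding d z (S \ {s})).ncard + (MaxAvoidingNew d z S s).ncard := by
  rw [maxAvoidingNew_eq_newMaximalSubsets, maxAvoiding_eq_maximalSubsets,
    maxAvoiding_eq_maximalSubsets]
  exact ncard_maximalSubsets_eq hS (isZAvoiding_antitone d z) s

theorem maxAvoiding_card_eq_card_erase_add_card_new
    (d : ℕ) (S : Set (Pt d)) (hS : S.Finite) (z : Pt d) (hzS : z ∉ S) (s : Pt d)
    (hsS : s ∈ S) :
    (MaxAvoiding d z S).ncard =
      (MaxAvoiding d z (S \ {s})).ncard + (MaxAvoidingNew d z S s).ncard :=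
  maxAvoiding_card_eq_card_erase_add_card_new_general d S hS z s
end
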